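/- arXiv:1708.02264 — 9 statements merged into one kernel-verified Lean document; each statement's English description precedes it below -/
import Mathlib

section
/- If G is a bipartite multigraph and H is a subgraph of G such that the edge set of H forms a clique in the square of the line graph of G (i.e., every two distinct edges of H are at distance at most 2 in G), then |E(H)| ≤ Δ(H)·(σ_G(H) − Δ(H)) ≤ σ_G(H)²/4, where σ_G(H) = max over edges xy of H of d_G(x)+d_G(y). -/
/-- Two edges of `G` are at distance at most 2 in the line graph sense:
they share an endpoint or some edge of `G` joins an endpoint of one to an
endpoint of the other.  This is adjacency (or equality) in `L(G)²`. -/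
def EdgesClose {V : Type*} (G : SimpleGraph V) (e f : Sym2 V) : Prop :=
  ∃ u v, u ∈ e ∧ v ∈ f ∧ (u = v ∨ G.Adj u v)

/-!
Let `a` be a vertex of maximum `H`-degree `Δ`, `T = N_H(a)` and `A = N_G(a) ⊇ T`. An edge of `H`
missing `A` is close to every edge `at`, `t ∈ T`; in a 2-colouring this forces its endpoint of
`a`'s colour to lie in the common `G`-neighbourhood `X` of `T`. Counting edges at `A` and at `X`,
the vertices of `A \ T` and of `X` contribute at most `Δ` each, and each `t ∈ T` at most
`σ - d_G(a)` minus the number of non-`H`-neighbours of `t` in `X`. The latter deficits are paid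
for by the `H`-edges between `T` and `X`, leaving `(d_G(a) - Δ) Δ + Δ (σ - d_G(a)) = Δ (σ - Δ)`.
-/

open Finset SimpleGraph

theorem EdgesClose.adj_of_coloring {V : Type*} {G : SimpleGraph V} (c : G.Coloring (Fin 2))
    {u v a t : V} (hclose : EdgesClose G s(u, v) s(a, t)) (huv : G.Adj u v) (hat : G.Adj a t)
    (hua : c u = c a) (hav : ¬G.Adj a v) : G.Adj u t := by
  have hcuv := c.valid huv
  have hcat := c.valid hat
  obtain ⟨p, q, hp, hq, hpq⟩ := hclose
  rw [Sym2.mem_iff] at hp hq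
  rcases hp with rfl | rfl <;> rcases hq with rfl | rfl <;> rcases hpq with rfl | hpq
  · exact absurd huv hav
  · exact absurd hua (c.valid hpq)
  · exact absurd hua hcat.symm
  · exact hpq
  · exact absurd hua hcuv
  · exact absurd hpq.symm hav
  · exact absurd hat hav
  · have : c p = c q := by omega
    exact absurd this (c.valid hpq)

theorem EdgesClose.forall_adj_or_forall_adj {V : Type*} {G : SimpleGraph V}
    (c : G.Coloring (Fin 2)) {u v a : V} {T : Set V} (huv : G.Adj u v) (hau : ¬G.Adj a u)
    (hav : ¬G.Adj a v) (hT : ∀ t ∈ T, G.Adj a t ∧ EdgesClose G s(u, v) s(a, t)) :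
    (∀ t ∈ T, G.Adj t u) ∨ (∀ t ∈ T, G.Adj t v) := by
  by_cases hua : c u = c a
  · exact .inl fun t ht => (adj_of_coloring c (hT t ht).2 huv (hT t ht).1 hua hav).symm
  · have hva : c v = c a := by have := c.valid huv; omega
    refine .inr fun t ht => (adj_of_coloring c ?_ huv.symm (hT t ht).1 hva hau).symm
    exact Sym2.eq_swap ▸ (hT t ht).2

section Counting

variable {V : Type*} [Fintype V] [DecidableEq V]

theorem card_edgeFinset_le_of_cover (H : SimpleGraph V) [DecidableRel H.Adj] {A X : Finset V}
    (hcover : ∀ u v, H.Adj u v → u ∉ A → v ∉ A → u ∈ X ∨ v ∈ X) :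
    #H.edgeFinset ≤ ∑ y ∈ A, H.degree y + ∑ x ∈ X, #(H.neighborFinset x \ A) := by
  have hsub : H.edgeFinset ⊆ (A.biUnion fun y => (H.neighborFinset y).image (s(y, ·))) ∪
      X.biUnion fun x => (H.neighborFinset x \ A).image (s(x, ·)) := by
    intro e he
    induction e using Sym2.ind with | _ u v => ?_
    rw [mem_edgeFinset, mem_edgeSet] at he
    simp only [mem_union, mem_biUnion, mem_image, mem_sdiff, mem_neighborFinset]
    by_cases hu : u ∈ A
    · exact Or.inl ⟨u, hu, v, he, rfl⟩
    by_cases hv : v ∈ A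
    · exact Or.inl ⟨v, hv, u, he.symm, Sym2.eq_swap⟩
    rcases hcover u v he hu hv with hx | hx
    · exact Or.inr ⟨u, hx, v, ⟨he, hv⟩, rfl⟩
    · exact Or.inr ⟨v, hx, u, ⟨he.symm, hu⟩, Sym2.eq_swap⟩
  calc #H.edgeFinset ≤ _ := card_le_card hsub
    _ ≤ _ := card_union_le _ _
    _ ≤ _ := by
      gcongr
      · exact card_biUnion_le.trans (sum_le_sum fun y _ => card_image_le.trans_eq
          (card_neighborFinset_eq_degree H y))
      · exact card_biUnion_le.trans (sum_le_sum fun x _ => card_image_le)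

variable {G H : SimpleGraph V} [DecidableRel G.Adj] [DecidableRel H.Adj]

theorem degree_add_card_filter_not_adj_le (hHG : H ≤ G) {t : V} {X : Finset V}
    (hX : X ⊆ G.neighborFinset t) : H.degree t + #{x ∈ X | ¬H.Adj t x} ≤ G.degree t := by
  rw [← card_neighborFinset_eq_degree, ← card_neighborFinset_eq_degree,
    ← card_union_of_disjoint]
  · refine card_le_card (union_subset (fun x hx => ?_) (filter_subset _ _ |>.trans hX))
    rw [mem_neighborFinset] at hx ⊢
    exact hHG hx
  · rw [Finset.disjoint_left]
    intro x hx hx'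
    exact (mem_filter.mp hx').2 ((mem_neighborFinset _ _ _).mp hx)

theorem card_neighborFinset_sdiff_add_card_filter_adj_le {T A : Finset V} (hTA : T ⊆ A) (x : V) :
    #(H.neighborFinset x \ A) + #{t ∈ T | H.Adj t x} ≤ H.degree x := by
  rw [← card_neighborFinset_eq_degree, ← card_union_of_disjoint]
  · refine card_le_card (union_subset sdiff_subset fun t ht => ?_)
    rw [mem_neighborFinset]
    exact (mem_filter.mp ht).2.symm
  · rw [Finset.disjoint_left]
    intro t ht ht'
    exact (mem_sdiff.mp ht).2 (hTA (mem_filter.mp ht').1)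

theorem sum_degree_add_sum_card_sdiff_add_mul_le (hHG : H ≤ G) {a : V} {Δ σ : ℕ}
    (hΔ : ∀ v, H.degree v ≤ Δ) (ha : H.degree a = Δ)
    (hσ : ∀ t, H.Adj a t → G.degree a + G.degree t ≤ σ) {X : Finset V}
    (hX : ∀ t, H.Adj a t → X ⊆ G.neighborFinset t) :
    ∑ y ∈ G.neighborFinset a, H.degree y +
      ∑ x ∈ X, #(H.neighborFinset x \ G.neighborFinset a) + Δ * Δ ≤ Δ * σ := by
  set A := G.neighborFinset a
  set T := H.neighborFinset a
  have hTA : T ⊆ A := fun t ht => by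
    rw [mem_neighborFinset] at ht ⊢
    exact hHG ht
  have hT : #T = Δ := (card_neighborFinset_eq_degree H a).trans ha
  have hA : #(A \ T) + Δ = G.degree a := by
    rw [← hT, card_sdiff_add_card_eq_card hTA, card_neighborFinset_eq_degree]
  have hsumA : ∑ y ∈ A, H.degree y + Δ * Δ ≤ G.degree a * Δ + ∑ t ∈ T, H.degree t := by
    rw [← sum_sdiff hTA, ← hA, add_mul]
    suffices ∑ y ∈ A \ T, H.degree y ≤ #(A \ T) * Δ by omega
    simpa using sum_le_card_nsmul (A \ T) (fun v => H.degree v) Δ fun v _ => hΔ v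
  have hsumT : ∑ t ∈ T, (H.degree t + #{x ∈ X | ¬H.Adj t x} + G.degree a) ≤ Δ * σ := by
    rw [← hT, ← smul_eq_mul, ← sum_const]
    refine sum_le_sum fun t ht => ?_
    have hat := (mem_neighborFinset _ _ _).mp ht
    have := degree_add_card_filter_not_adj_le hHG (hX t hat)
    linarith [hσ t hat]
  have hsumX : ∑ x ∈ X, (#(H.neighborFinset x \ A) + #{t ∈ T | H.Adj t x}) ≤ #X * Δ := by
    simpa using sum_le_card_nsmul X _ Δ fun x _ =>
      (card_neighborFinset_sdiff_add_card_filter_adj_le hTA x).trans (hΔ x)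
  have hpairs : ∑ t ∈ T, #{x ∈ X | ¬H.Adj t x} + ∑ x ∈ X, #{t ∈ T | H.Adj t x} = Δ * #X := by
    have hcomm : ∑ t ∈ T, #{x ∈ X | H.Adj t x} = ∑ x ∈ X, #{t ∈ T | H.Adj t x} :=
      sum_card_bipartiteAbove_eq_sum_card_bipartiteBelow _
    rw [← hcomm, ← sum_add_distrib, ← hT, ← smul_eq_mul, ← sum_const]
    exact sum_congr rfl fun t _ => by rw [add_comm, card_filter_add_card_filter_not]
  simp only [sum_add_distrib, sum_const, smul_eq_mul, hT] at hsumT hsumX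
  linarith

end Counting

theorem Nat.mul_sub_le_sq_div_four (a b : ℕ) : a * (b - a) ≤ b ^ 2 / 4 := by
  rw [Nat.le_div_iff_mul_le four_pos]
  rcases le_total a b with hab | hba
  · zify [hab]
    nlinarith [sq_nonneg ((b : ℤ) - 2 * a)]
  · simp [Nat.sub_eq_zero_of_le hba]

/-- If `G` is a bipartite graph and `H` is a subgraph of `G` whose edge set is a
clique in `L(G)²`, then `|E(H)| ≤ Δ(H)·(σ_G(H) − Δ(H)) ≤ σ_G(H)²/4`, where
`σ_G(H)` is the maximum over edges `xy` of `H` of `d_G(x)+d_G(y)` and `Δ(H)` is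
the maximum degree of `H`. -/
theorem stmt0 {V : Type*} [Fintype V] (G : SimpleGraph V)
    (hbip : G.Colorable 2) (H : G.Subgraph)
    (hclique : ∀ e ∈ H.edgeSet, ∀ f ∈ H.edgeSet, EdgesClose G e f)
    (σ Δ : ℕ)
    (hσ : IsGreatest {n : ℕ | ∃ x y, H.Adj x y ∧
      (G.neighborSet x).ncard + (G.neighborSet y).ncard = n} σ)
    (hΔ : IsGreatest {d : ℕ | ∃ v, (H.neighborSet v).ncard = d} Δ) :
    H.edgeSet.ncard ≤ Δ * (σ - Δ) ∧ Δ * (σ - Δ) ≤ σ ^ 2 / 4 := by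
  classical
  obtain ⟨c⟩ := hbip
  have hHdeg v : (H.neighborSet v).ncard = H.spanningCoe.degree v := by
    rw [← card_neighborFinset_eq_degree, ← Set.ncard_coe_finset, coe_neighborFinset]; rfl
  have hGdeg v : (G.neighborSet v).ncard = G.degree v := by
    rw [← card_neighborFinset_eq_degree, ← Set.ncard_coe_finset, coe_neighborFinset]
  have hE : H.edgeSet.ncard = #H.spanningCoe.edgeFinset := by
    rw [← Set.ncard_coe_finset, coe_edgeFinset]; rfl
  obtain ⟨a, ha⟩ := hΔ.1
  set X : Finset V := {x | ∀ t, H.Adj a t → G.Adj t x}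
  have hcover u v (huv : H.Adj u v) (hu : u ∉ G.neighborFinset a) (hv : v ∉ G.neighborFinset a) :
      u ∈ X ∨ v ∈ X := by
    rw [mem_neighborFinset] at hu hv
    simpa [X] using EdgesClose.forall_adj_or_forall_adj c huv.adj_sub hu hv
      (T := {t | H.Adj a t}) fun t hat => ⟨hat.adj_sub, hclique _ huv _ hat⟩
  have hcount := sum_degree_add_sum_card_sdiff_add_mul_le H.spanningCoe_le
    (fun v => hHdeg v ▸ hΔ.2 ⟨v, rfl⟩) ((hHdeg a).symm.trans ha)
    (fun t hat => hGdeg a ▸ hGdeg t ▸ hσ.2 ⟨a, t, hat, rfl⟩) (X := X)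
    (fun t hat x hx => (mem_neighborFinset _ _ _).mpr ((mem_filter.mp hx).2 t hat))
  have hedges := card_edgeFinset_le_of_cover H.spanningCoe hcover
  refine ⟨?_, Nat.mul_sub_le_sq_div_four Δ σ⟩
  rw [Nat.mul_sub]
  omega
end

section
/- If G is a bipartite multigraph, then the clique number of the square of its line graph satisfies ω(L(G)²) ≤ σ(G)²/4, where σ(G) = max over edges uv of G of d(u)+d(v). -/
/-- Double counting of an arbitrary relation between two finsets. -/
lemma sum_card_filter_comm {α β : Type*} [DecidableEq α] [DecidableEq β]
    (A : Finset α) (B : Finset β) (r : α → β → Prop) [∀ x y, Decidable (r x y)] :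
    ∑ x ∈ A, (B.filter (fun y => r x y)).card
      = ∑ y ∈ B, (A.filter (fun x => r x y)).card := by
  simp only [Finset.card_filter]
  exact Finset.sum_comm

/-- If `G` is bipartite, then the clique number of `L(G)²` is at most `σ(G)²/4`,
where `σ(G) = max_{uv ∈ E(G)} (d(u)+d(v))` is the Ore-degree: every set of edges
of `G` that is a clique in `L(G)²` has size at most `σ(G)²/4`. -/
theorem stmt1 {V : Type*} [Fintype V] (G : SimpleGraph V)
    (hbip : G.Colorable 2) (σ : ℕ)
    (hσ : IsGreatest {n : ℕ | ∃ x y, G.Adj x y ∧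
      (G.neighborSet x).ncard + (G.neighborSet y).ncard = n} σ)
    (s : Finset (Sym2 V)) (hs : ∀ e ∈ s, e ∈ G.edgeSet)
    (hcl : ∀ e ∈ s, ∀ f ∈ s, EdgesClose G e f) :
    s.card ≤ σ ^ 2 / 4 := by
  classical
  obtain ⟨C⟩ := hbip
  rcases s.eq_empty_or_nonempty with rfl | hne
  · simp
  -- normalized endpoints of an edge: `xE e` has color 0, `yE e` has color 1
  set xE : Sym2 V → V := fun e => if C e.out.1 = 0 then e.out.1 else e.out.2 with hxE
  set yE : Sym2 V → V := fun e => if C e.out.1 = 0 then e.out.2 else e.out.1 with hyE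
  have fin2 : ∀ a b : Fin 2, a ≠ b → a = 0 → b = 1 := by decide
  have fin2' : ∀ a b : Fin 2, a ≠ b → a ≠ 0 → (a = 1 ∧ b = 0) := by decide
  have key : ∀ e ∈ s, G.Adj (xE e) (yE e) ∧ e = s(xE e, yE e) ∧
      C (xE e) = 0 ∧ C (yE e) = 1 := by
    intro e he
    have hout : s(e.out.1, e.out.2) = e := by rw [Sym2.mk, e.out_eq]
    have hadj : G.Adj e.out.1 e.out.2 := by
      rw [← SimpleGraph.mem_edgeSet, hout]; exact hs e he
    have hne12 := C.valid hadj
    by_cases h1 : C e.out.1 = 0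
    · have hx : xE e = e.out.1 := by simp only [hxE]; exact if_pos h1
      have hy : yE e = e.out.2 := by simp only [hyE]; exact if_pos h1
      rw [hx, hy]
      exact ⟨hadj, hout.symm, h1, fin2 _ _ hne12 h1⟩
    · obtain ⟨h1', h2⟩ := fin2' _ _ hne12 h1
      have hx : xE e = e.out.2 := by simp only [hxE]; exact if_neg h1
      have hy : yE e = e.out.1 := by simp only [hyE]; exact if_neg h1
      rw [hx, hy]
      exact ⟨hadj.symm, by rw [Sym2.eq_swap, hout], h2, h1'⟩
  -- fibers over color-1 endpoints
  set fib : V → Finset (Sym2 V) := fun y => s.filter (fun e => yE e = y) with hfib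
  set Ys : Finset V := s.image yE with hYs
  have hYsne : Ys.Nonempty := hne.image yE
  obtain ⟨y0, hy0Ys, hy0max⟩ := Ys.exists_max_image (fun y => (fib y).card) hYsne
  -- degrees
  have hdeg : ∀ {x y : V}, G.Adj x y → G.degree x + G.degree y ≤ σ := by
    intro x y hxy
    apply hσ.2
    refine ⟨x, y, hxy, ?_⟩
    have hnc : ∀ z : V, (G.neighborSet z).ncard = G.degree z := fun z => by
      rw [Set.ncard_eq_toFinset_card', Set.toFinset_card,
        SimpleGraph.card_neighborSet_eq_degree]
    rw [hnc, hnc]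
  set NB : Finset V := G.neighborFinset y0 with hNB
  set P : V → Prop := fun y => ∀ e ∈ s, yE e = y → G.Adj (xE e) y0 with hP
  set O : Finset V := Ys.filter P with hO
  set I : Finset V := Ys.filter (fun y => ¬ P y) with hI
  have hy0O : y0 ∈ O := by
    rw [hO, Finset.mem_filter]
    refine ⟨hy0Ys, fun e he hey => ?_⟩
    have := (key e he).1
    rwa [hey] at this
  have hy0nI : y0 ∉ I := by
    rw [hI, Finset.mem_filter]
    rintro ⟨-, hnp⟩
    exact hnp (Finset.mem_filter.mp hy0O).2
  -- injectivity of xE on a fiber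
  have hinj : ∀ y : V, Set.InjOn xE (fib y) := by
    intro y e he e' he'
    rw [hfib, Finset.coe_filter, Set.mem_setOf_eq] at he he'
    intro hxx
    rw [(key e he.1).2.1, (key e' he'.1).2.1, he.2, he'.2, hxx]
  -- the crucial cross lemma
  have hcross : ∀ y ∈ I, ∀ e ∈ s, yE e = y0 → G.Adj (xE e) y := by
    intro y hyI e he hey0
    have hyne : y ≠ y0 := fun h => hy0nI (h ▸ hyI)
    obtain ⟨-, hnp⟩ := Finset.mem_filter.mp hyI
    simp only [hP] at hnp
    push_neg at hnp
    obtain ⟨e₁, he₁, hye₁, hnadj⟩ := hnp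
    obtain ⟨u, v, hu, hv, huv⟩ := hcl e₁ he₁ e he
    obtain ⟨hadj₁, hrep₁, hcx₁, hcy₁⟩ := key e₁ he₁
    obtain ⟨hadj, hrep, hcx, hcy⟩ := key e he
    rw [hrep₁, Sym2.mem_iff] at hu
    rw [hrep, Sym2.mem_iff] at hv
    rw [hye₁] at hu
    rw [hey0] at hv
    rw [hye₁] at hcy₁
    rw [hey0] at hcy
    rw [hye₁] at hadj₁
    rw [hey0] at hadj
    -- colors: C (xE e₁) = 0, C y = 1, C (xE e) = 0, C y0 = 1
    rcases hu with hu | hu <;> rcases hv with hv | hv <;> subst hu <;> subst hv <;>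
        rcases huv with heq | hadj'
    · exact absurd (by rw [heq]; exact hadj) hnadj
    · exact absurd (hcx₁.trans hcx.symm) (C.valid hadj')
    · rw [← heq] at hcy; exact absurd (hcx₁.symm.trans hcy) (by decide)
    · exact absurd hadj' hnadj
    · rw [← heq] at hcx; exact absurd (hcy₁.symm.trans hcx) (by decide)
    · exact hadj'.symm
    · exact absurd heq hyne
    · exact absurd (hcy₁.trans hcy.symm) (C.valid hadj')
  -- counting
  have hsplit : s.card = ∑ y ∈ O, (fib y).card + ∑ y ∈ I, (fib y).card := by
    rw [Finset.card_eq_sum_card_fiberwise (f := yE) (t := Ys)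
      (fun e he => Finset.mem_image_of_mem yE he)]
    exact (Finset.sum_filter_add_sum_filter_not Ys P _).symm
  set Q : V → V → Prop := fun x y => ∃ e ∈ s, yE e = y ∧ xE e = x with hQ
  have hOcount : ∀ y ∈ O, (fib y).card = (NB.filter (fun x => Q x y)).card := by
    intro y hyO
    obtain ⟨hyYs, hpy⟩ := Finset.mem_filter.mp hyO
    have himg : (fib y).image xE = NB.filter (fun x => Q x y) := by
      ext x
      simp only [Finset.mem_image, Finset.mem_filter, hfib, hNB,
        SimpleGraph.mem_neighborFinset, hQ]
      constructor
      · rintro ⟨e, ⟨hee, hye⟩, rfl⟩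
        exact ⟨(hpy e hee hye).symm, e, hee, hye, rfl⟩
      · rintro ⟨-, e, hee, hye, rfl⟩
        exact ⟨e, ⟨hee, hye⟩, rfl⟩
    rw [← himg, Finset.card_image_of_injOn (hinj y)]
  have hIcount : ∀ y ∈ I, (fib y).card ≤ (NB.filter (fun x => G.Adj x y)).card := by
    intro y hyI
    have h1 : (fib y).card ≤ (fib y0).card := hy0max y (Finset.mem_filter.mp hyI).1
    have h2 : (fib y0).image xE ⊆ NB.filter (fun x => G.Adj x y) := by
      intro x hx
      obtain ⟨e, he, rfl⟩ := Finset.mem_image.mp hx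
      obtain ⟨hee, hye⟩ := Finset.mem_filter.mp he
      refine Finset.mem_filter.mpr ⟨?_, hcross y hyI e hee hye⟩
      rw [hNB, SimpleGraph.mem_neighborFinset]
      have := (key e hee).1
      rw [hye] at this
      exact this.symm
    calc (fib y).card ≤ (fib y0).card := h1
      _ = ((fib y0).image xE).card := (Finset.card_image_of_injOn (hinj y0)).symm
      _ ≤ _ := Finset.card_le_card h2
  have hOsum : ∑ y ∈ O, (fib y).card = ∑ x ∈ NB, (O.filter (fun y => Q x y)).card := by
    rw [Finset.sum_congr rfl hOcount]
    exact (sum_card_filter_comm NB O Q).symm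
  have hIsum : ∑ y ∈ I, (fib y).card ≤ ∑ x ∈ NB, (I.filter (fun y => G.Adj x y)).card := by
    calc ∑ y ∈ I, (fib y).card ≤ ∑ y ∈ I, (NB.filter (fun x => G.Adj x y)).card :=
          Finset.sum_le_sum hIcount
      _ = _ := (sum_card_filter_comm NB I (fun x y => G.Adj x y)).symm
  have hpoint : ∀ x ∈ NB, (O.filter (fun y => Q x y)).card
      + (I.filter (fun y => G.Adj x y)).card ≤ G.degree x := by
    intro x hx
    have hOI : Disjoint O I := by
      rw [hO, hI]
      exact Finset.disjoint_filter_filter_not Ys Ys P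
    have hdisj : Disjoint (O.filter (fun y => Q x y)) (I.filter (fun y => G.Adj x y)) :=
      Finset.disjoint_filter_filter hOI
    have hsub : (O.filter (fun y => Q x y)) ∪ (I.filter (fun y => G.Adj x y))
        ⊆ G.neighborFinset x := by
      intro y hy
      rw [SimpleGraph.mem_neighborFinset]
      rcases Finset.mem_union.mp hy with hy' | hy'
      · obtain ⟨-, e, he, hye, hxe⟩ := Finset.mem_filter.mp hy'
        have := (key e he).1
        rw [hye, hxe] at this
        exact this
      · exact (Finset.mem_filter.mp hy').2
    calc (O.filter (fun y => Q x y)).card + (I.filter (fun y => G.Adj x y)).card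
        = ((O.filter (fun y => Q x y)) ∪ (I.filter (fun y => G.Adj x y))).card :=
          (Finset.card_union_of_disjoint hdisj).symm
      _ ≤ (G.neighborFinset x).card := Finset.card_le_card hsub
      _ = G.degree x := rfl
  have hdegx : ∀ x ∈ NB, G.degree x ≤ σ - G.degree y0 := by
    intro x hx
    rw [hNB, SimpleGraph.mem_neighborFinset] at hx
    have := hdeg hx.symm
    omega
  -- main chain
  have hmain : s.card ≤ G.degree y0 * (σ - G.degree y0) := by
    calc s.card = ∑ y ∈ O, (fib y).card + ∑ y ∈ I, (fib y).card := hsplit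
      _ ≤ ∑ x ∈ NB, (O.filter (fun y => Q x y)).card
          + ∑ x ∈ NB, (I.filter (fun y => G.Adj x y)).card := by
          rw [hOsum]; exact Nat.add_le_add_left hIsum _
      _ = ∑ x ∈ NB, ((O.filter (fun y => Q x y)).card
          + (I.filter (fun y => G.Adj x y)).card) := (Finset.sum_add_distrib).symm
      _ ≤ ∑ x ∈ NB, G.degree x := Finset.sum_le_sum hpoint
      _ ≤ ∑ _x ∈ NB, (σ - G.degree y0) := Finset.sum_le_sum hdegx
      _ = NB.card * (σ - G.degree y0) := by rw [Finset.sum_const, smul_eq_mul]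
      _ = G.degree y0 * (σ - G.degree y0) := rfl
  -- NB is nonempty, hence degree y0 ≤ σ
  obtain ⟨e0, he0, hye0⟩ := Finset.mem_image.mp hy0Ys
  have hx0 : G.Adj (xE e0) y0 := by
    have := (key e0 he0).1; rwa [hye0] at this
  have hDle : G.degree y0 ≤ σ := by
    have := hdeg hx0
    omega
  rw [Nat.le_div_iff_mul_le (by norm_num : 0 < 4)]
  have h4 : G.degree y0 * (σ - G.degree y0) * 4 ≤ σ ^ 2 := by
    zify [hDle]
    nlinarith [sq_nonneg ((σ : ℤ) - 2 * G.degree y0)]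
  calc s.card * 4 ≤ G.degree y0 * (σ - G.degree y0) * 4 :=
        Nat.mul_le_mul_right 4 hmain
    _ ≤ σ ^ 2 := h4
end

section
/- If G is a bipartite graph with maximum degree Δ, then ω(L(G)²) ≤ Δ². -/
open Finset

section

variable {V : Type*} {G : SimpleGraph V}

theorem card_filter_map_prodComm (T : Finset (V × V)) (P : V × V → Prop) [DecidablePred P] :
    #{p ∈ T.map (Equiv.prodComm V V).toEmbedding | P p} = #{p ∈ T | P p.swap} := by
  rw [filter_map, card_map]
  rfl

structure IsOrientedClique (G : SimpleGraph V) (T : Finset (V × V)) : Prop where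
  adj : ∀ p ∈ T, G.Adj p.1 p.2
  cross : ∀ p ∈ T, ∀ q ∈ T, G.Adj p.1 q.2 ∨ G.Adj q.1 p.2

namespace IsOrientedClique

variable {T : Finset (V × V)}

theorem map_prodComm (h : IsOrientedClique G T) :
    IsOrientedClique G (T.map (Equiv.prodComm V V).toEmbedding) where
  adj _ hp := (h.adj _ (mem_map_equiv.1 hp)).symm
  cross _ hp _ hq := ((h.cross _ (mem_map_equiv.1 hq) _ (mem_map_equiv.1 hp)).imp
    G.adj_symm G.adj_symm)

variable [Fintype V] [DecidableEq V] [DecidableRel G.Adj]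

theorem card_filter_fst_le_degree (h : IsOrientedClique G T) (w : V) :
    #{q ∈ T | q.1 = w} ≤ G.degree w := by
  rw [← G.card_neighborFinset_eq_degree]
  refine card_le_card_of_injOn Prod.snd (fun q hq => ?_) fun q hq q' hq' hqq' => ?_
  · obtain ⟨hqT, rfl⟩ := mem_filter.1 hq
    simpa using h.adj q hqT
  · exact Prod.ext ((mem_filter.1 hq).2.trans (mem_filter.1 hq').2.symm) hqq'

theorem card_filter_add_card_filter_fst_le_maxDegree (h : IsOrientedClique G T) (w x : V) :
    #{q ∈ T | ¬G.Adj w q.2 ∧ q.1 = x} + #{q ∈ T | q.1 = w} ≤ G.maxDegree := by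
  set S := {q ∈ T | ¬G.Adj w q.2 ∧ q.1 = x}
  set W := {q ∈ T | q.1 = w}
  have hW : ∀ q ∈ W, G.Adj w q.2 := fun q hq => by
    obtain ⟨hqT, rfl⟩ := mem_filter.1 hq
    exact h.adj q hqT
  have hSW : Disjoint S W := disjoint_left.2 fun q hqS hqW => (mem_filter.1 hqS).2.1 (hW q hqW)
  rw [← card_union_of_disjoint hSW]
  rcases S.eq_empty_or_nonempty with hS | ⟨p, hp⟩
  · rw [hS, empty_union]
    exact (h.card_filter_fst_le_degree w).trans (G.degree_le_maxDegree w)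
  obtain ⟨hpT, hpw, rfl⟩ := mem_filter.1 hp
  have hfst : ∀ q ∈ S ∪ W, q.1 = if G.Adj w q.2 then w else p.1 := by
    intro q hq
    rcases mem_union.1 hq with hqS | hqW
    · obtain ⟨-, hqw, hqp⟩ := mem_filter.1 hqS
      rw [if_neg hqw, hqp]
    · rw [if_pos (hW q hqW), (mem_filter.1 hqW).2]
  refine (card_le_card_of_injOn Prod.snd (t := G.neighborFinset p.1) (fun q hq => ?_)
    fun q hq q' hq' hqq' => Prod.ext (by rw [hfst q hq, hfst q' hq', hqq']) hqq').trans ?_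
  · rw [mem_coe, SimpleGraph.mem_neighborFinset]
    rcases mem_union.1 hq with hqS | hqW
    · obtain ⟨hqT, -, hqp⟩ := mem_filter.1 hqS
      exact hqp ▸ h.adj q hqT
    · obtain ⟨hqT, rfl⟩ := mem_filter.1 hqW
      exact (h.cross p hpT q hqT).resolve_right hpw
  · rw [G.card_neighborFinset_eq_degree]
    exact G.degree_le_maxDegree _

theorem card_le_maxDegree_sq_of_forall_le (h : IsOrientedClique G T) (hT : T.Nonempty) {w : V}
    (hmax : ∀ v, #{p ∈ T | p.2 = v} ≤ #{p ∈ T | p.1 = w}) : #T ≤ G.maxDegree ^ 2 := by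
  set Δ := G.maxDegree
  set d := #{p ∈ T | p.1 = w}
  obtain ⟨p₀, hp₀⟩ := hT
  obtain ⟨q, hq⟩ : {p ∈ T | p.1 = w}.Nonempty :=
    have : {p ∈ T | p.2 = p₀.2}.Nonempty := ⟨p₀, mem_filter.2 ⟨hp₀, rfl⟩⟩
    card_pos.1 <| (card_pos.2 this).trans_le (hmax p₀.2)
  rw [mem_filter] at hq
  have hd : d ≤ Δ := le_of_add_le_right (h.card_filter_add_card_filter_fst_le_maxDegree w w)
  have hnear : #{p ∈ T | G.Adj w p.2} ≤ d * Δ := by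
    refine (card_le_mul_card_image_of_maps_to (f := Prod.snd) (t := G.neighborFinset w)
      (by simp) d fun v _ => ?_).trans ?_
    · rw [filter_filter]
      exact (card_le_card fun p => by simp +contextual).trans (hmax v)
    · rw [G.card_neighborFinset_eq_degree]
      exact Nat.mul_le_mul_left _ (G.degree_le_maxDegree w)
  have hfar : #{p ∈ T | ¬G.Adj w p.2} ≤ (Δ - d) * Δ := by
    refine (card_le_mul_card_image_of_maps_to (f := Prod.fst) (t := G.neighborFinset q.2)
      (fun p hp => ?_) (Δ - d) fun x _ => ?_).trans ?_
    · rw [mem_filter] at hp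
      rw [SimpleGraph.mem_neighborFinset, G.adj_comm]
      exact (h.cross p hp.1 q hq.1).resolve_right (hq.2 ▸ hp.2)
    · rw [filter_filter]
      exact Nat.le_sub_of_add_le (h.card_filter_add_card_filter_fst_le_maxDegree w x)
    · rw [G.card_neighborFinset_eq_degree]
      exact Nat.mul_le_mul_left _ (G.degree_le_maxDegree _)
  calc #T = #{p ∈ T | G.Adj w p.2} + #{p ∈ T | ¬G.Adj w p.2} :=
        (card_filter_add_card_filter_not _).symm
    _ ≤ d * Δ + (Δ - d) * Δ := add_le_add hnear hfar
    _ = Δ ^ 2 := by rw [← add_mul, Nat.add_sub_cancel' hd, sq]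

theorem card_le_maxDegree_sq (h : IsOrientedClique G T) : #T ≤ G.maxDegree ^ 2 := by
  rcases T.eq_empty_or_nonempty with rfl | hT
  · simp
  have : Nonempty V := ⟨hT.choose.1⟩
  obtain ⟨w, -, hw⟩ := exists_max_image univ (fun v : V => #{p ∈ T | p.1 = v}) univ_nonempty
  obtain ⟨v, -, hv⟩ := exists_max_image univ (fun v : V => #{p ∈ T | p.2 = v}) univ_nonempty
  rcases le_total #{p ∈ T | p.2 = v} #{p ∈ T | p.1 = w} with hvw | hwv
  · exact h.card_le_maxDegree_sq_of_forall_le hT fun u => (hv u (mem_univ u)).trans hvw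
  · have := h.map_prodComm.card_le_maxDegree_sq_of_forall_le hT.map (w := v) fun u => by
      simpa [card_filter_map_prodComm] using (hw u (mem_univ u)).trans hwv
    rwa [card_map] at this

end IsOrientedClique

theorem adj_or_adj_of_edgesClose (c : G.Coloring (Fin 2)) {p₁ p₂ q₁ q₂ : V}
    (hp : G.Adj p₁ p₂) (hq : G.Adj q₁ q₂) (hp₁ : c p₁ = 0) (hq₁ : c q₁ = 0)
    (hpq : EdgesClose G s(p₁, p₂) s(q₁, q₂)) : G.Adj p₁ q₂ ∨ G.Adj q₁ p₂ := by
  obtain ⟨u, v, hu, hv, huv⟩ := hpq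
  have hp₂ : c p₂ = 1 := by have := c.valid hp; omega
  have hq₂ : c q₂ = 1 := by have := c.valid hq; omega
  rw [Sym2.mem_iff] at hu hv
  rcases hu with rfl | rfl <;> rcases hv with rfl | rfl <;> rcases huv with rfl | huv <;>
    grind [c.valid, SimpleGraph.adj_symm]

variable [Fintype V] [DecidableEq V]

def orientedEdges (c : G.Coloring (Fin 2)) (s : Finset (Sym2 V)) : Finset (V × V) :=
  {p | c p.1 = 0 ∧ s(p.1, p.2) ∈ s}

theorem card_le_card_orientedEdges (c : G.Coloring (Fin 2)) {s : Finset (Sym2 V)}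
    (hs : ∀ e ∈ s, e ∈ G.edgeSet) : #s ≤ #(orientedEdges c s) := by
  refine card_le_card_of_surjOn (fun p => s(p.1, p.2)) fun e he => ?_
  induction e using Sym2.ind with
  | h x y =>
    rw [mem_coe] at he
    have hxy : G.Adj x y := hs _ he
    by_cases hx : c x = 0
    · exact ⟨(x, y), by simp [orientedEdges, hx, he], rfl⟩
    · refine ⟨(y, x), ?_, Sym2.eq_swap⟩
      have hy : c y = 0 := by have := c.valid hxy; omega
      simp [orientedEdges, hy, Sym2.eq_swap, he]

theorem isOrientedClique_orientedEdges (c : G.Coloring (Fin 2)) {s : Finset (Sym2 V)}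
    (hs : ∀ e ∈ s, e ∈ G.edgeSet) (hcl : ∀ e ∈ s, ∀ f ∈ s, EdgesClose G e f) :
    IsOrientedClique G (orientedEdges c s) := by
  have hmem : ∀ {p}, p ∈ orientedEdges c s → c p.1 = 0 ∧ s(p.1, p.2) ∈ s := by
    simp [orientedEdges]
  have hadj : ∀ p ∈ orientedEdges c s, G.Adj p.1 p.2 := fun p hp => hs _ (hmem hp).2
  exact ⟨hadj, fun p hp q hq => adj_or_adj_of_edgesClose c (hadj p hp) (hadj q hq) (hmem hp).1
    (hmem hq).1 (hcl _ (hmem hp).2 _ (hmem hq).2)⟩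

end

/-- If `G` is a bipartite graph with maximum degree `Δ`, then `ω(L(G)²) ≤ Δ²`:
every set of edges of `G` pairwise at distance at most 2 has size at most `Δ²`. -/
theorem stmt2 {V : Type*} [Fintype V] (G : SimpleGraph V) [DecidableRel G.Adj]
    (hbip : G.Colorable 2)
    (s : Finset (Sym2 V)) (hs : ∀ e ∈ s, e ∈ G.edgeSet)
    (hcl : ∀ e ∈ s, ∀ f ∈ s, EdgesClose G e f) :
    s.card ≤ G.maxDegree ^ 2 := by
  classical
  obtain ⟨c⟩ := hbip
  exact (card_le_card_orientedEdges c hs).trans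
    (isOrientedClique_orientedEdges c hs hcl).card_le_maxDegree_sq
end

section
/- Let ε ∈ [0,1] and let G be a bipartite graph with bipartition (A,B) and maximum degree Δ. If H is a subgraph of G such that E(H) is a clique in L(G)² and |E(H)| ≥ (1−ε)Δ², then there exist A' ⊆ A and B' ⊆ B with |A'|, |B'| ≤ Δ such that the number of edges of H with one end in A' and the other in B' is at least (1 − 2ε − 2√ε)Δ². -/
open Finset

namespace SimpleGraph

variable {V : Type*} {G K : SimpleGraph V} {s t : Set V}

def EdgesPairwiseClose (G K : SimpleGraph V) : Prop :=
  ∀ e ∈ K.edgeSet, ∀ f ∈ K.edgeSet, EdgesClose G e f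

def edgesBetween (K : SimpleGraph V) (X Y : Set V) : Set (Sym2 V) :=
  {e | e ∈ K.edgeSet ∧ ∃ x ∈ X, ∃ y ∈ Y, e = s(x, y)}

theorem edgesBetween_comm (K : SimpleGraph V) (X Y : Set V) :
    K.edgesBetween X Y = K.edgesBetween Y X := by
  ext e
  constructor <;> rintro ⟨he, x, hx, y, hy, rfl⟩ <;> exact ⟨he, y, hy, x, hx, Sym2.eq_swap⟩

theorem IsBipartiteWith.of_le (h : G.IsBipartiteWith s t) (hKG : K ≤ G) :
    K.IsBipartiteWith s t :=
  ⟨h.disjoint, fun _ _ hvw ↦ h.mem_of_adj (hKG hvw)⟩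

theorem IsBipartiteWith.not_adj (h : G.IsBipartiteWith s t) {v w : V} (hv : v ∈ s)
    (hw : w ∈ s) : ¬G.Adj v w :=
  fun hvw ↦ h.disjoint.ne_of_mem hw (h.mem_of_mem_adj hv hvw) rfl

/-- Of the four ways in which the edges `uw` and `vz` can be close, bipartiteness rules out
`uv`, `wz` and the hypotheses rule out `wv`, so the fourth, `uz`, must occur. -/
theorem IsBipartiteWith.adj_of_edgesClose (h : G.IsBipartiteWith s t) (hKG : K ≤ G)
    (hK : G.EdgesPairwiseClose K) {u v w z : V}
    (hu : u ∈ s) (hv : v ∈ s) (huw : K.Adj u w) (hvw : ¬G.Adj v w) (hvz : K.Adj v z) :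
    G.Adj u z := by
  have hw : w ∈ t := h.mem_of_mem_adj hu (hKG huw)
  have hz : z ∈ t := h.mem_of_mem_adj hv (hKG hvz)
  obtain ⟨p, q, hp, hq, hpq⟩ := hK s(u, w) huw s(v, z) hvz
  rw [Sym2.mem_iff] at hp hq
  rcases hp with rfl | rfl <;> rcases hq with rfl | rfl <;> rcases hpq with hpq | hpq
  · exact absurd (hpq ▸ hKG huw) hvw
  · exact absurd hpq (h.not_adj hu hv)
  · exact absurd hpq (h.disjoint.ne_of_mem hu hz)
  · exact hpq
  · exact absurd hpq (h.disjoint.ne_of_mem hv hw).symm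
  · exact absurd hpq.symm hvw
  · exact absurd (hpq ▸ hKG hvz) hvw
  · exact absurd hpq (h.symm.not_adj hw hz)

theorem IsBipartiteWith.adj_of_mem_sdiff_neighborFinset [Fintype V] [DecidableEq V]
    [DecidableRel G.Adj] {s t : Finset V}
    (h : G.IsBipartiteWith s t) (hKG : K ≤ G)
    (hK : G.EdgesPairwiseClose K) {a y x z : V} (ha : a ∈ s)
    (hy : y ∈ t \ G.neighborFinset a) (hyx : K.Adj y x) (haz : K.Adj a z) : G.Adj x z := by
  rw [mem_sdiff, mem_neighborFinset] at hy
  exact h.adj_of_edgesClose hKG hK (h.mem_of_mem_adj' hy.1 (hKG hyx.symm)) ha hyx.symm hy.2 haz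

theorem sum_card_filter_adj_comm [DecidableRel K.Adj] (Y S : Finset V) :
    ∑ y ∈ Y, #{x ∈ S | K.Adj y x} = ∑ x ∈ S, #{y ∈ Y | K.Adj y x} :=
  sum_card_bipartiteAbove_eq_sum_card_bipartiteBelow _

section Finite

variable [Fintype V] [DecidableRel G.Adj] [DecidableRel K.Adj]

theorem neighborFinset_subset_of_le (hKG : K ≤ G) (v : V) :
    K.neighborFinset v ⊆ G.neighborFinset v :=
  fun _ hw ↦ (G.mem_neighborFinset _ _).2 (hKG ((K.mem_neighborFinset _ _).1 hw))

theorem degree_le_maxDegree_of_le (hKG : K ≤ G) (v : V) : K.degree v ≤ G.maxDegree :=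
  (degree_le_of_le hKG).trans (G.degree_le_maxDegree v)

theorem card_neighborFinset_le_maxDegree (v : V) : #(G.neighborFinset v) ≤ G.maxDegree :=
  (G.card_neighborFinset_eq_degree v).trans_le (G.degree_le_maxDegree v)

theorem card_add_card_le_maxDegree [DecidableEq V] {v : V} {X Y : Finset V}
    (hX : X ⊆ G.neighborFinset v) (hY : Y ⊆ G.neighborFinset v) (hXY : Disjoint X Y) :
    #X + #Y ≤ G.maxDegree := by
  rw [← card_union_of_disjoint hXY]
  exact (card_le_card (union_subset hX hY)).trans (card_neighborFinset_le_maxDegree v)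

theorem degree_eq_card_filter_adj {y : V} {S : Finset V} (h : K.neighborFinset y ⊆ S) :
    K.degree y = #{x ∈ S | K.Adj y x} := by
  rw [← card_neighborFinset_eq_degree]
  congr 1
  ext x
  rw [mem_filter, mem_neighborFinset]
  exact ⟨fun hx ↦ ⟨h ((K.mem_neighborFinset _ _).2 hx), hx⟩, And.right⟩

theorem sum_card_filter_adj_le (Y S : Finset V) :
    ∑ y ∈ Y, #{x ∈ S | K.Adj y x} ≤ #S * K.maxDegree := by
  have hx (x : V) : #{y ∈ Y | K.Adj y x} ≤ K.maxDegree :=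
    calc #{y ∈ Y | K.Adj y x} ≤ #(K.neighborFinset x) :=
          card_le_card fun y hy ↦ (K.mem_neighborFinset _ _).2 (mem_filter.1 hy).2.symm
      _ = K.degree x := K.card_neighborFinset_eq_degree x
      _ ≤ K.maxDegree := K.degree_le_maxDegree x
  calc ∑ y ∈ Y, #{x ∈ S | K.Adj y x} = ∑ x ∈ S, #{y ∈ Y | K.Adj y x} :=
        sum_card_filter_adj_comm Y S
    _ ≤ ∑ _x ∈ S, K.maxDegree := sum_le_sum fun x _ ↦ hx x
    _ = #S * K.maxDegree := by rw [sum_const, smul_eq_mul]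

theorem degree_add_card_le [DecidableEq V] (hKG : K ≤ G) {y : V} {S : Finset V}
    (hS : S ⊆ G.neighborFinset y) :
    K.degree y + #S ≤ G.maxDegree + #{x ∈ S | K.Adj y x} := by
  have hout : K.degree y + #{x ∈ S | ¬K.Adj y x} ≤ G.maxDegree := by
    rw [← card_neighborFinset_eq_degree]
    exact card_add_card_le_maxDegree (Y := {x ∈ S | ¬K.Adj y x})
      (neighborFinset_subset_of_le hKG y) ((filter_subset _ S).trans hS)
      (Finset.disjoint_left.2 fun x hx hx' ↦
        (mem_filter.1 hx').2 ((K.mem_neighborFinset y x).1 hx))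
  have := card_filter_add_card_filter_not (s := S) (fun x ↦ K.Adj y x)
  omega

theorem sum_degree_add_card_mul_le [DecidableEq V] (hKG : K ≤ G) {P Y : Finset V}
    (hYP : Disjoint Y P) (hY : ∀ y ∈ Y, ∀ x, K.Adj y x → ∀ z ∈ P, G.Adj x z) :
    ∑ y ∈ Y, K.degree y + #{x | ∀ z ∈ P, G.Adj x z} * #P ≤
      #{x | ∀ z ∈ P, G.Adj x z} * G.maxDegree := by
  set S : Finset V := {x | ∀ z ∈ P, G.Adj x z}
  have hYS (y : V) (hy : y ∈ Y) : K.neighborFinset y ⊆ S := fun x hx ↦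
    mem_filter.2 ⟨mem_univ x, hY y hy x ((K.mem_neighborFinset y x).1 hx)⟩
  have hS (x : V) (hx : x ∈ S) : #{y ∈ Y | K.Adj y x} + #P ≤ G.maxDegree :=
    card_add_card_le_maxDegree
      (fun y hy ↦ (G.mem_neighborFinset x y).2 (hKG (mem_filter.1 hy).2.symm))
      (fun z hz ↦ (G.mem_neighborFinset x z).2 ((mem_filter.1 hx).2 z hz))
      (disjoint_of_subset_left (filter_subset _ Y) hYP)
  calc ∑ y ∈ Y, K.degree y + #S * #P = ∑ x ∈ S, (#{y ∈ Y | K.Adj y x} + #P) := by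
        rw [sum_congr rfl fun y hy ↦ degree_eq_card_filter_adj (hYS y hy),
          sum_card_filter_adj_comm, sum_add_distrib, sum_const, smul_eq_mul]
    _ ≤ ∑ _x ∈ S, G.maxDegree := sum_le_sum hS
    _ = #S * G.maxDegree := by rw [sum_const, smul_eq_mul]

theorem sum_degree_add_sum_degree_add_mul_le [DecidableEq V] (hKG : K ≤ G) {P Y : Finset V}
    (hYP : Disjoint Y P) (hY : ∀ y ∈ Y, ∀ x, K.Adj y x → ∀ z ∈ P, G.Adj x z) :
    ∑ y ∈ P, K.degree y + ∑ y ∈ Y, K.degree y + #P * #{x | ∀ z ∈ P, G.Adj x z} ≤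
      #P * G.maxDegree + #{x | ∀ z ∈ P, G.Adj x z} * K.maxDegree := by
  set S : Finset V := {x | ∀ z ∈ P, G.Adj x z}
  have hP := sum_le_sum fun y (hy : y ∈ P) ↦ degree_add_card_le hKG (S := S)
    fun x hx ↦ (G.mem_neighborFinset y x).2 ((mem_filter.1 hx).2 y hy).symm
  have hY : ∑ y ∈ Y, K.degree y = ∑ y ∈ Y, #{x ∈ S | K.Adj y x} :=
    sum_congr rfl fun y hy ↦ degree_eq_card_filter_adj fun x hx ↦
      mem_filter.2 ⟨mem_univ x, hY y hy x ((K.mem_neighborFinset y x).1 hx)⟩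
  have hS := sum_card_filter_adj_le (K := K) (P ∪ Y) S
  rw [sum_union hYP.symm] at hS
  simp only [sum_add_distrib, sum_const, smul_eq_mul] at hP
  omega

theorem IsBipartiteWith.degree_add_degree_le [DecidableEq V] (h : G.IsBipartiteWith s t)
    (hKG : K ≤ G) (hK : G.EdgesPairwiseClose K) {u v : V}
    (hu : u ∈ s) (hv : v ∈ s) :
    K.degree u + K.degree v ≤ #{x ∈ G.neighborFinset v | K.Adj u x} + G.maxDegree := by
  have hsplit := card_filter_add_card_filter_not (s := K.neighborFinset u) (fun x ↦ G.Adj v x)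
  have hin : {x ∈ K.neighborFinset u | G.Adj v x} = {x ∈ G.neighborFinset v | K.Adj u x} := by
    ext x
    simp only [mem_filter, mem_neighborFinset, and_comm]
  have hout : #{x ∈ K.neighborFinset u | ¬G.Adj v x} + K.degree v ≤ G.maxDegree := by
    obtain hE | ⟨w, hw⟩ :=
      ({x ∈ K.neighborFinset u | ¬G.Adj v x} : Finset V).eq_empty_or_nonempty
    · rw [hE, card_empty, zero_add]
      exact degree_le_maxDegree_of_le hKG v
    rw [mem_filter, mem_neighborFinset] at hw
    rw [← card_neighborFinset_eq_degree]
    refine card_add_card_le_maxDegree (v := u)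
      ((filter_subset _ _).trans (neighborFinset_subset_of_le hKG u))
      (fun z hz ↦ (G.mem_neighborFinset u z).2 <|
        h.adj_of_edgesClose hKG hK hu hv hw.1 hw.2 ((K.mem_neighborFinset v z).1 hz))
      (Finset.disjoint_right.2 fun z hz hz' ↦
        (mem_filter.1 hz').2 (hKG ((K.mem_neighborFinset v z).1 hz)))
  rw [hin, card_neighborFinset_eq_degree] at hsplit
  omega

theorem IsBipartiteWith.two_mul_sum_degree_le [DecidableEq V] (h : G.IsBipartiteWith s t)
    (hKG : K ≤ G) (hK : G.EdgesPairwiseClose K) {v : V}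
    {Y : Finset V} (hv : v ∈ s) (hY : ↑Y ⊆ s)
    (hdeg : ∀ y ∈ Y, K.degree y ≤ K.degree v) :
    2 * ∑ y ∈ Y, K.degree y ≤
      ∑ y ∈ Y, #{x ∈ G.neighborFinset v | K.Adj y x} + #Y * G.maxDegree := by
  calc 2 * ∑ y ∈ Y, K.degree y = ∑ y ∈ Y, 2 * K.degree y := mul_sum _ _ _
    _ ≤ ∑ y ∈ Y, (#{x ∈ G.neighborFinset v | K.Adj y x} + G.maxDegree) :=
        sum_le_sum fun y hy ↦ by
          have := h.degree_add_degree_le hKG hK (hY hy) hv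
          have := hdeg y hy
          omega
    _ = _ := by rw [sum_add_distrib, sum_const, smul_eq_mul]

theorem card_edgeFinset_eq_sum_degree_add_sum_degree [DecidableEq V] {s t : Finset V}
    (h : G.IsBipartiteWith s t) (hKG : K ≤ G) {a : V} (ha : a ∈ s) :
    #K.edgeFinset = ∑ y ∈ G.neighborFinset a, K.degree y +
      ∑ y ∈ t \ G.neighborFinset a, K.degree y := by
  rw [← isBipartiteWith_sum_degrees_eq_card_edges' (h.of_le hKG), add_comm,
    sum_sdiff (isBipartiteWith_neighborFinset_subset h ha)]

theorem IsBipartiteWith.card_edgeFinset_add_sq_le [DecidableEq V] {s t : Finset V}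
    (h : G.IsBipartiteWith s t) (hKG : K ≤ G)
    (hK : G.EdgesPairwiseClose K) {a : V} (ha : a ∈ s)
    (hmax : K.degree a = K.maxDegree) :
    #K.edgeFinset + K.maxDegree ^ 2 ≤ 2 * G.maxDegree * K.maxDegree := by
  set N := G.neighborFinset a
  set P := K.neighborFinset a
  have hPN : P ⊆ N := neighborFinset_subset_of_le hKG a
  have hP : #P = K.maxDegree := (K.card_neighborFinset_eq_degree a).trans hmax
  have hN : #(N \ P) + #P ≤ G.maxDegree := by
    rw [card_sdiff_add_card_eq_card hPN]
    exact card_neighborFinset_le_maxDegree a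
  have hNP : ∑ y ∈ N \ P, K.degree y ≤ #(N \ P) * K.maxDegree := by
    simpa using sum_le_sum fun y (_ : y ∈ N \ P) ↦ K.degree_le_maxDegree y
  have hPY := sum_degree_add_sum_degree_add_mul_le hKG (P := P) (Y := t \ N)
    (disjoint_of_subset_right hPN sdiff_disjoint)
    fun y hy x hyx z hz ↦ h.adj_of_mem_sdiff_neighborFinset hKG hK ha hy hyx
      ((K.mem_neighborFinset a z).1 hz)
  rw [card_edgeFinset_eq_sum_degree_add_sum_degree h hKG ha, ← sum_sdiff hPN]
  rw [hP] at hPY hN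
  nlinarith

theorem IsBipartiteWith.two_mul_card_edgeFinset_le [DecidableEq V] {s t : Finset V}
    (h : G.IsBipartiteWith s t) (hKG : K ≤ G)
    (hK : G.EdgesPairwiseClose K) {a b y₀ : V} (ha : a ∈ s)
    (hay₀ : K.Adj a y₀) (hb : b ∈ t)
    (hbmax : ∀ y ∈ G.neighborFinset a, K.degree y ≤ K.degree b) :
    2 * #K.edgeFinset + 2 * G.maxDegree * K.degree a ≤
      ∑ y ∈ G.neighborFinset a, #{x ∈ G.neighborFinset b | K.Adj y x} +
        3 * G.maxDegree ^ 2 := by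
  set N := G.neighborFinset a
  set P := K.neighborFinset a
  have hPN : P ⊆ N := neighborFinset_subset_of_le hKG a
  have hP : #P ≤ G.maxDegree := (card_le_card hPN).trans (card_neighborFinset_le_maxDegree a)
  have hS : #{x | ∀ z ∈ P, G.Adj x z} ≤ G.maxDegree :=
    (card_le_card fun x hx ↦ (G.mem_neighborFinset y₀ x).2
      ((mem_filter.1 hx).2 y₀ ((K.mem_neighborFinset a y₀).2 hay₀)).symm).trans
      (card_neighborFinset_le_maxDegree y₀)
  have hout := sum_degree_add_card_mul_le hKG (P := P) (Y := t \ N)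
    (disjoint_of_subset_right hPN sdiff_disjoint)
    fun y hy x hyx z hz ↦ h.adj_of_mem_sdiff_neighborFinset hKG hK ha hy hyx
      ((K.mem_neighborFinset a z).1 hz)
  have hin := h.symm.two_mul_sum_degree_le hKG hK hb
    (isBipartiteWith_neighborFinset_subset h ha) hbmax
  have hN : #N ≤ G.maxDegree := card_neighborFinset_le_maxDegree a
  rw [card_edgeFinset_eq_sum_degree_add_sum_degree h hKG ha]
  rw [K.card_neighborFinset_eq_degree] at hout hP
  nlinarith

theorem sum_card_filter_adj_le_ncard_edgesBetween {X Y : Finset V} (hXY : Disjoint X Y) :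
    ∑ y ∈ Y, #{x ∈ X | K.Adj y x} ≤ (K.edgesBetween X Y).ncard := by
  rw [← card_sigma, ← Set.ncard_coe_finset]
  refine Set.ncard_le_ncard_of_injOn (fun p ↦ s(p.2, p.1)) ?_ ?_
  · rintro ⟨y, x⟩ hp
    simp only [coe_sigma, Set.mem_sigma_iff, mem_coe, mem_filter] at hp
    exact ⟨hp.2.2.symm, x, hp.2.1, y, hp.1, rfl⟩
  · rintro ⟨y₁, x₁⟩ h₁ ⟨y₂, x₂⟩ h₂ he
    simp only [coe_sigma, Set.mem_sigma_iff, mem_coe, mem_filter] at h₁ h₂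
    rcases Sym2.eq_iff.1 he with ⟨rfl, rfl⟩ | ⟨rfl, rfl⟩
    · rfl
    · exact absurd h₂.1 (Finset.disjoint_left.1 hXY h₁.2.1)

theorem IsBipartiteWith.exists_dense_edgesBetween [DecidableEq V] {s t : Finset V}
    (h : G.IsBipartiteWith s t) (hKG : K ≤ G)
    (hK : G.EdgesPairwiseClose K) (hE : K.edgeSet.Nonempty) :
    ∃ X ⊆ s, ∃ Y ⊆ t, #X ≤ G.maxDegree ∧ #Y ≤ G.maxDegree ∧
      #K.edgeFinset + K.maxDegree ^ 2 ≤ 2 * G.maxDegree * K.maxDegree ∧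
      2 * #K.edgeFinset + 2 * G.maxDegree * K.maxDegree ≤
        (K.edgesBetween X Y).ncard + 3 * G.maxDegree ^ 2 := by
  obtain ⟨a, hmax, y₀, hay₀⟩ :
      ∃ a, K.degree a = K.maxDegree ∧ ∃ y₀, K.Adj a y₀ := by
    obtain ⟨e, he⟩ := hE
    induction e using Sym2.ind with | _ u w => ?_
    have : Nonempty V := ⟨u⟩
    obtain ⟨a, ha⟩ := K.exists_maximal_degree_vertex
    refine ⟨a, ha.symm, (K.degree_pos_iff_exists_adj a).1 ?_⟩
    exact ha ▸ ((K.degree_pos_iff_exists_adj u).2 ⟨w, he⟩).trans_le (K.degree_le_maxDegree u)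
  wlog ha : a ∈ s generalizing s t
  · have hat : a ∈ t := ((h.mem_of_adj (hKG hay₀)).resolve_left fun h' ↦ ha h'.1).1
    obtain ⟨Y, hY, X, hX, hYΔ, hXΔ, hm, hC⟩ := this h.symm hat
    exact ⟨X, hX, Y, hY, hXΔ, hYΔ, hm, edgesBetween_comm K Y X ▸ hC⟩
  obtain ⟨b, hbN, hbmax⟩ := exists_max_image (G.neighborFinset a) (fun v ↦ K.degree v)
    ⟨y₀, (G.mem_neighborFinset a y₀).2 (hKG hay₀)⟩
  have hb : b ∈ t := isBipartiteWith_neighborFinset_subset h ha hbN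
  have hC := sum_card_filter_adj_le_ncard_edgesBetween (K := K)
    (disjoint_of_subset_left (isBipartiteWith_neighborFinset_subset' h hb)
      (disjoint_of_subset_right (isBipartiteWith_neighborFinset_subset h ha)
        (disjoint_coe.1 h.disjoint)))
  have hcount := h.two_mul_card_edgeFinset_le hKG hK ha hay₀ hb hbmax
  refine ⟨G.neighborFinset b, isBipartiteWith_neighborFinset_subset' h hb, G.neighborFinset a,
    isBipartiteWith_neighborFinset_subset h ha, card_neighborFinset_le_maxDegree b,
    card_neighborFinset_le_maxDegree a, h.card_edgeFinset_add_sq_le hKG hK ha hmax, ?_⟩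
  rw [hmax] at hcount
  omega

end Finite

end SimpleGraph

theorem one_sub_two_mul_sub_two_mul_sqrt_mul_sq_le {ε Δ p m C : ℝ} (hε : 0 ≤ ε)
    (hp : 0 ≤ p) (hpΔ : p ≤ Δ) (hm : (1 - ε) * Δ ^ 2 ≤ m)
    (h₁ : m + p ^ 2 ≤ 2 * Δ * p) (h₂ : 2 * m + 2 * Δ * p ≤ C + 3 * Δ ^ 2) :
    (1 - 2 * ε - 2 * Real.sqrt ε) * Δ ^ 2 ≤ C := by
  have hΔ : 0 ≤ Δ := hp.trans hpΔ
  have hsq : Δ - p ≤ Real.sqrt (ε * Δ ^ 2) := Real.le_sqrt_of_sq_le (by nlinarith)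
  rw [Real.sqrt_mul hε, Real.sqrt_sq hΔ] at hsq
  nlinarith [mul_le_mul_of_nonneg_left hsq hΔ]

theorem stmt7_general {V : Type*} [Fintype V] (G : SimpleGraph V) [DecidableRel G.Adj]
    (A B : Set V) (hdisj : Disjoint A B)
    (hbip : ∀ x y, G.Adj x y → (x ∈ A ∧ y ∈ B) ∨ (x ∈ B ∧ y ∈ A))
    (ε : ℝ) (hε : 0 ≤ ε ∧ ε ≤ 1)
    (H : G.Subgraph)
    (hclique : ∀ e ∈ H.edgeSet, ∀ f ∈ H.edgeSet, EdgesClose G e f)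
    (hsize : (1 - ε) * (G.maxDegree : ℝ) ^ 2 ≤ (H.edgeSet.ncard : ℝ)) :
    ∃ A' ⊆ A, ∃ B' ⊆ B, A'.ncard ≤ G.maxDegree ∧ B'.ncard ≤ G.maxDegree ∧
      (1 - 2 * ε - 2 * Real.sqrt ε) * (G.maxDegree : ℝ) ^ 2 ≤
        (({e | e ∈ H.edgeSet ∧ ∃ x ∈ A', ∃ y ∈ B', e = s(x, y)} : Set (Sym2 V)).ncard : ℝ) := by
  classical
  have hGAB : G.IsBipartiteWith ↑A.toFinset ↑B.toFinset := by
    simpa only [Set.coe_toFinset] using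
      (⟨hdisj, fun x y h ↦ hbip x y h⟩ : G.IsBipartiteWith A B)
  rw [← H.edgeSet_spanningCoe] at hclique hsize ⊢
  obtain hE | hE := H.spanningCoe.edgeSet.eq_empty_or_nonempty
  · refine ⟨∅, Set.empty_subset A, ∅, Set.empty_subset B, by simp, by simp, ?_⟩
    rw [hE, Set.ncard_empty, Nat.cast_zero] at hsize
    refine le_trans ?_ (Nat.cast_nonneg _)
    nlinarith [Real.sqrt_nonneg ε, sq_nonneg (G.maxDegree : ℝ)]
  obtain ⟨X, hX, Y, hY, hXΔ, hYΔ, h₁, h₂⟩ :=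
    hGAB.exists_dense_edgesBetween H.spanningCoe_le hclique hE
  refine ⟨X, Set.subset_toFinset.1 hX, Y, Set.subset_toFinset.1 hY, by rwa [Set.ncard_coe_finset],
    by rwa [Set.ncard_coe_finset], ?_⟩
  rw [← SimpleGraph.coe_edgeFinset, Set.ncard_coe_finset] at hsize
  exact one_sub_two_mul_sub_two_mul_sqrt_mul_sq_le hε.1 (Nat.cast_nonneg _)
    (Nat.cast_le.2 (SimpleGraph.maxDegree_mono H.spanningCoe_le)) hsize (by exact_mod_cast h₁)
    (by exact_mod_cast h₂)

/-- Let `ε ∈ [0,1]`, `G` a bipartite graph with bipartition `(A,B)` and maximum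
degree `Δ`.  If `H` is a subgraph of `G` whose edge set is a clique in `L(G)²`
and `|E(H)| ≥ (1−ε)Δ²`, then there exist `A' ⊆ A`, `B' ⊆ B` of sizes at most
`Δ` such that the number of edges of `H` with one end in `A'` and the other in
`B'` is at least `(1 − 2ε − 2√ε)Δ²`. -/
theorem stmt7 {V : Type*} [Fintype V] (G : SimpleGraph V) [DecidableRel G.Adj]
    (A B : Set V) (hdisj : Disjoint A B) (hcover : A ∪ B = Set.univ)
    (hbip : ∀ x y, G.Adj x y → (x ∈ A ∧ y ∈ B) ∨ (x ∈ B ∧ y ∈ A))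
    (ε : ℝ) (hε : 0 ≤ ε ∧ ε ≤ 1)
    (H : G.Subgraph)
    (hclique : ∀ e ∈ H.edgeSet, ∀ f ∈ H.edgeSet, EdgesClose G e f)
    (hsize : (1 - ε) * (G.maxDegree : ℝ) ^ 2 ≤ (H.edgeSet.ncard : ℝ)) :
    ∃ A' ⊆ A, ∃ B' ⊆ B, A'.ncard ≤ G.maxDegree ∧ B'.ncard ≤ G.maxDegree ∧
      (1 - 2 * ε - 2 * Real.sqrt ε) * (G.maxDegree : ℝ) ^ 2 ≤
        (({e | e ∈ H.edgeSet ∧ ∃ x ∈ A', ∃ y ∈ B', e = s(x, y)} : Set (Sym2 V)).ncard : ℝ) :=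
  stmt7_general G A B hdisj hbip ε hε H hclique hsize
end

section
/- Let α ∈ [0,1] and let G be a bipartite graph with parts A, B of sizes at most n. If H is a subgraph of G with |E(H)| ≥ (1−α)n² and E(H) is a clique in L(G)², then G contains a subgraph isomorphic to the complete bipartite graph K_{r,r} with r = (1 − √(2α))·n. -/
open Finset

theorem Finset.le_card_filter_le_of_le_sum {ι : Type*} (s : Finset ι) (f : ι → ℕ) {n : ℕ}
    (hs : #s ≤ n) (hf : ∀ i ∈ s, f i ≤ n) {c : ℝ} (hc : 0 ≤ c)
    (hsum : (1 - c ^ 2) * n ^ 2 ≤ ∑ i ∈ s, (f i : ℝ)) :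
    (1 - c) * n ≤ #{i ∈ s | (1 - c) * n ≤ f i} := by
  set t := (1 - c) * n
  by_contra! hlt
  set k := ⌈t⌉₊
  have ht : 0 < t := lt_of_le_of_lt (Nat.cast_nonneg _) hlt
  have hk : (k : ℝ) < t + 1 := Nat.ceil_lt_add_one ht.le
  have hk1 : (1 : ℝ) ≤ k := by exact_mod_cast Nat.one_le_iff_ne_zero.mpr (Nat.ceil_pos.mpr ht).ne'
  have hkn : (k : ℝ) ≤ n := by exact_mod_cast Nat.ceil_le.mpr (by nlinarith : t ≤ n)
  have hfilter : {i ∈ s | t ≤ f i} = {i ∈ s | k ≤ f i} :=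
    filter_congr fun i _ => Nat.ceil_le.symm
  rw [hfilter] at hlt
  have hhigh : ∑ i ∈ s with k ≤ f i, (f i : ℝ) ≤ #{i ∈ s | k ≤ f i} * n := by
    simpa using sum_le_card_nsmul _ _ (n : ℝ) fun i hi => by
      exact_mod_cast hf i (mem_filter.mp hi).1
  have hlow : ∑ i ∈ s with ¬ k ≤ f i, (f i : ℝ) ≤ #{i ∈ s | ¬ k ≤ f i} * ((k : ℝ) - 1) := by
    simpa using sum_le_card_nsmul _ _ ((k : ℝ) - 1) fun i hi => by
      have : (f i : ℝ) + 1 ≤ k := by exact_mod_cast Nat.succ_le_of_lt (mem_filter.mp hi).2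
      linarith
  have hcard : (#{i ∈ s | k ≤ f i} : ℝ) + #{i ∈ s | ¬ k ≤ f i} ≤ n := by
    exact_mod_cast (card_filter_add_card_filter_not _).trans_le hs
  rw [← sum_filter_add_sum_filter_not s (fun i => k ≤ f i)] at hsum
  -- The sum is at most `n (k - 1) + #S (n - k + 1) < n t + t (n - t) = (1 - c²) n²`.
  nlinarith [mul_lt_mul_of_pos_right hlt (by linarith : (0 : ℝ) < n - k + 1),
    mul_nonneg (by linarith : (0 : ℝ) ≤ t + 1 - k) (by nlinarith : (0 : ℝ) ≤ n - t),
    mul_le_mul_of_nonneg_right hcard (by linarith : (0 : ℝ) ≤ k - 1)]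

namespace SimpleGraph

variable {V : Type*} {G K : SimpleGraph V} {s t : Set V}

theorem IsBipartiteWith.anti (h : G.IsBipartiteWith s t) (hK : K ≤ G) :
    K.IsBipartiteWith s t :=
  ⟨h.disjoint, fun _ _ hvw => h.mem_of_adj (hK hvw)⟩

theorem IsBipartiteWith.adj_of_edgesClose_s8 (h : G.IsBipartiteWith s t) {a b u v : V}
    (ha : a ∈ s) (hb : b ∈ t) (hab : ¬ G.Adj a b) (hav : G.Adj a v) (hub : G.Adj u b)
    (hclose : EdgesClose G s(a, v) s(u, b)) : G.Adj u v := by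
  have hv : v ∈ t := h.mem_of_mem_adj ha hav
  have hu : u ∈ s := h.mem_of_mem_adj' hb hub
  have hst : ∀ {x}, x ∈ s → x ∉ t := fun hx => Set.disjoint_left.mp h.disjoint hx
  obtain ⟨p, q, hp, hq, hpq⟩ := hclose
  rcases Sym2.mem_iff.mp hp with rfl | rfl <;> rcases Sym2.mem_iff.mp hq with rfl | rfl
  · rcases hpq with rfl | hpq
    · exact absurd hub hab
    · exact absurd (h.mem_of_mem_adj ha hpq) (hst hu)
  · rcases hpq with rfl | hpq
    · exact absurd hb (hst ha)
    · exact absurd hpq hab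
  · rcases hpq with rfl | hpq
    · exact absurd hv (hst hu)
    · exact hpq.symm
  · rcases hpq with rfl | hpq
    · exact absurd hav hab
    · exact absurd hv (hst (h.mem_of_mem_adj' hb hpq))

theorem exists_card_eq_of_forall_adj {S T : Finset V} (hadj : ∀ x ∈ S, ∀ y ∈ T, G.Adj x y)
    {c : ℝ} (hS : c ≤ #S) (hT : c ≤ #T) :
    ∃ r : ℕ, c ≤ r ∧ ∃ S' T' : Finset V, Disjoint S' T' ∧ #S' = r ∧ #T' = r ∧
      ∀ x ∈ S', ∀ y ∈ T', G.Adj x y := by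
  obtain ⟨S', hS', hS'card⟩ := exists_subset_card_eq (min_le_left #S #T)
  obtain ⟨T', hT', hT'card⟩ := exists_subset_card_eq (min_le_right #S #T)
  have hadj' : ∀ x ∈ S', ∀ y ∈ T', G.Adj x y := fun x hx y hy => hadj x (hS' hx) y (hT' hy)
  refine ⟨min #S #T, ?_, S', T', ?_, hS'card, hT'card, hadj'⟩
  · rcases min_choice #S #T with h | h <;> rw [h] <;> assumption
  · exact Finset.disjoint_left.mpr fun x hxS hxT => (hadj' x hxS x hxT).ne rfl

theorem IsBipartiteWith.le_card_filter_le_degree [Fintype V] [DecidableRel K.Adj]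
    {s t : Finset V} (h : K.IsBipartiteWith s t) {n : ℕ} (hs : #s ≤ n) (ht : #t ≤ n)
    {c : ℝ} (hc : 0 ≤ c) (hE : (1 - c ^ 2) * n ^ 2 ≤ #K.edgeFinset) :
    (1 - c) * n ≤ #{v ∈ s | (1 - c) * n ≤ K.degree v} := by
  refine s.le_card_filter_le_of_le_sum (fun v => K.degree v) hs
    (fun v hv => (isBipartiteWith_degree_le h hv).trans ht) hc ?_
  exact_mod_cast isBipartiteWith_sum_degrees_eq_card_edges h ▸ hE

end SimpleGraph

open SimpleGraph

theorem stmt8_general {V : Type*} [Fintype V] (G : SimpleGraph V)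
    (A B : Set V) (hdisj : Disjoint A B)
    (hbip : ∀ x y, G.Adj x y → (x ∈ A ∧ y ∈ B) ∨ (x ∈ B ∧ y ∈ A))
    (n : ℕ) (hA : A.ncard ≤ n) (hB : B.ncard ≤ n)
    (α : ℝ) (hα : 0 ≤ α ∧ α ≤ 1)
    (H : G.Subgraph)
    (hclique : ∀ e ∈ H.edgeSet, ∀ f ∈ H.edgeSet, EdgesClose G e f)
    (hsize : (1 - α) * (n : ℝ) ^ 2 ≤ (H.edgeSet.ncard : ℝ)) :
    ∃ r : ℕ, (1 - Real.sqrt (2 * α)) * (n : ℝ) ≤ (r : ℝ) ∧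
      ∃ S T : Finset V, Disjoint S T ∧ S.card = r ∧ T.card = r ∧
        ∀ x ∈ S, ∀ y ∈ T, G.Adj x y := by
  classical
  set c := Real.sqrt (2 * α)
  have hc2 : c ^ 2 = 2 * α := Real.sq_sqrt (by linarith [hα.1])
  have hG : G.IsBipartiteWith A.toFinset B.toFinset :=
    ⟨by simpa using hdisj, by simpa using hbip⟩
  set K := H.spanningCoe
  have hK : K.IsBipartiteWith A.toFinset B.toFinset := hG.anti H.spanningCoe_le
  have hE : (1 - c ^ 2) * n ^ 2 ≤ #K.edgeFinset := by
    rw [← Set.ncard_coe_finset, coe_edgeFinset, Subgraph.edgeSet_spanningCoe]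
    nlinarith [sq_nonneg (n : ℝ)]
  have hA' : #A.toFinset ≤ n := by rwa [← Set.ncard_eq_toFinset_card']
  have hB' : #B.toFinset ≤ n := by rwa [← Set.ncard_eq_toFinset_card']
  have hS := hK.le_card_filter_le_degree hA' hB' (Real.sqrt_nonneg _) hE
  have hT := hK.symm.le_card_filter_le_degree hB' hA' (Real.sqrt_nonneg _) hE
  by_cases hST : ∀ x ∈ {v ∈ A.toFinset | (1 - c) * n ≤ K.degree v},
      ∀ y ∈ {v ∈ B.toFinset | (1 - c) * n ≤ K.degree v}, G.Adj x y
  · exact exists_card_eq_of_forall_adj hST hS hT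
  push Not at hST
  obtain ⟨a, ha, b, hb, hab⟩ := hST
  simp only [mem_filter] at ha hb
  refine exists_card_eq_of_forall_adj (S := K.neighborFinset b) (T := K.neighborFinset a) ?_
    (by rw [card_neighborFinset_eq_degree]; exact hb.2)
    (by rw [card_neighborFinset_eq_degree]; exact ha.2)
  intro u hu v hv
  have hav : H.Adj a v := (mem_neighborFinset _ _ _).mp hv
  have hub : H.Adj u b := ((mem_neighborFinset _ _ _).mp hu).symm
  exact hG.adj_of_edgesClose_s8 ha.1 hb.1 hab hav.adj_sub hub.adj_sub (hclique _ hav _ hub)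

/-- Let `α ∈ [0,1]` and `G` a bipartite graph with parts `A`, `B` of sizes at
most `n`.  If `H` is a subgraph of `G` with `|E(H)| ≥ (1−α)n²` whose edge set is
a clique in `L(G)²`, then `G` contains a complete bipartite subgraph `K_{r,r}`
with `r ≥ (1 − √(2α))·n`. -/
theorem stmt8 {V : Type*} [Fintype V] (G : SimpleGraph V)
    (A B : Set V) (hdisj : Disjoint A B) (hcover : A ∪ B = Set.univ)
    (hbip : ∀ x y, G.Adj x y → (x ∈ A ∧ y ∈ B) ∨ (x ∈ B ∧ y ∈ A))
    (n : ℕ) (hA : A.ncard ≤ n) (hB : B.ncard ≤ n)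
    (α : ℝ) (hα : 0 ≤ α ∧ α ≤ 1)
    (H : G.Subgraph)
    (hclique : ∀ e ∈ H.edgeSet, ∀ f ∈ H.edgeSet, EdgesClose G e f)
    (hsize : (1 - α) * (n : ℝ) ^ 2 ≤ (H.edgeSet.ncard : ℝ)) :
    ∃ r : ℕ, (1 - Real.sqrt (2 * α)) * (n : ℝ) ≤ (r : ℝ) ∧
      ∃ S T : Finset V, Disjoint S T ∧ S.card = r ∧ T.card = r ∧
        ∀ x ∈ S, ∀ y ∈ T, G.Adj x y :=
  stmt8_general G A B hdisj hbip n hA hB α hα H hclique hsize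
end

section
/- For every ε ∈ [0,1], if G is a bipartite graph with ω(L(G)²) ≥ (1−ε)Δ(G)², then G contains a subgraph isomorphic to K_{r,r} where r = (1 − √8·ε^{1/4})·Δ(G). -/
namespace Stmt9Aux

set_option linter.unusedSectionVars false

open Finset

variable {V : Type*} [Fintype V] [DecidableEq V] (G : SimpleGraph V) [DecidableRel G.Adj]

/-- The set of `s`-neighbours of `x`. -/
def Dst (s : Finset (Sym2 V)) (x : V) : Finset V :=
  (G.neighborFinset x).filter (fun y => s(x, y) ∈ s)

lemma mem_Dst {s : Finset (Sym2 V)} {x y : V} :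
    y ∈ Dst G s x ↔ G.Adj x y ∧ s(x, y) ∈ s := by
  simp [Dst]

lemma Dst_subset (s : Finset (Sym2 V)) (x : V) : Dst G s x ⊆ G.neighborFinset x :=
  Finset.filter_subset _ _

lemma Dst_card_le_degree (s : Finset (Sym2 V)) (x : V) :
    (Dst G s x).card ≤ G.degree x :=
  Finset.card_le_card (Dst_subset G s x)

lemma Dst_card_le (s : Finset (Sym2 V)) (x : V) :
    (Dst G s x).card ≤ G.maxDegree :=
  le_trans (Dst_card_le_degree G s x) (G.degree_le_maxDegree x)

lemma fin2_eq (a b d : Fin 2) (h1 : a ≠ d) (h2 : b ≠ d) : a = b := by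
  revert a b d; decide

lemma fin2_false (a b w : Fin 2) (h : a ≠ b) (h1 : w ≠ a) (h2 : w ≠ b) : False := by
  revert a b w; decide

lemma fin2_ne (a b p q : Fin 2) (h : a ≠ b) (h1 : p ≠ b) (h2 : q ≠ a) : p ≠ q := by
  revert a b p q; decide

section Close

variable (c : V → Fin 2) (hc : ∀ {a b : V}, G.Adj a b → c a ≠ c b)
variable (s : Finset (Sym2 V)) (hs : ∀ e ∈ s, e ∈ G.edgeSet)
variable (hcl : ∀ e ∈ s, ∀ f ∈ s, EdgesClose G e f)

include hc hs hcl

/-- Key lemma: if `x`, `y` lie in different colour classes and are non-adjacent,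
then every `s`-neighbour of `x` is adjacent to every `s`-neighbour of `y`. -/
lemma adj_of_close {x y p q : V} (hxy : c x ≠ c y) (hnadj : ¬ G.Adj x y)
    (hp : p ∈ Dst G s x) (hq : q ∈ Dst G s y) : G.Adj p q := by
  rw [mem_Dst] at hp hq
  obtain ⟨hpx, hps⟩ := hp
  obtain ⟨hqy, hqs⟩ := hq
  obtain ⟨w, z, hw, hz, hwz⟩ := hcl _ hps _ hqs
  rw [Sym2.mem_iff] at hw hz
  have hcp : c x ≠ c p := hc hpx
  have hcq : c y ≠ c q := hc hqy
  have hpy : c p = c y := fin2_eq _ _ _ hcp.symm hxy.symm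
  have hqx : c q = c x := fin2_eq _ _ _ hcq.symm hxy
  rcases hw with hw | hw <;> subst hw <;> rcases hz with hz | hz <;> subst hz
  · rcases hwz with h | h
    · exact absurd (congrArg c h) hxy
    · exact absurd h hnadj
  · rcases hwz with h | h
    · rw [← h] at hqy
      exact absurd hqy.symm hnadj
    · exact absurd hqx.symm (hc h)
  · rcases hwz with h | h
    · rw [h] at hpx
      exact absurd hpx hnadj
    · exact absurd hpy (hc h)
  · rcases hwz with h | h
    · rw [h] at hpy
      exact absurd hpy.symm hcq
    · exact h

/-- Counting edges of `s` through a set of vertices. -/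
lemma card_filter_le_sum (W : Finset V) (P : Sym2 V → Prop) [DecidablePred P]
    (hP : ∀ e ∈ s, P e → ∃ w ∈ W, w ∈ e) :
    (s.filter P).card ≤ ∑ w ∈ W, (Dst G s w).card := by
  have hsub : s.filter P ⊆ W.biUnion (fun w => (Dst G s w).image (fun y => s(w, y))) := by
    intro e he
    rw [Finset.mem_filter] at he
    obtain ⟨w, hwW, hwe⟩ := hP e he.1 he.2
    rw [Finset.mem_biUnion]
    refine ⟨w, hwW, Finset.mem_image.mpr ⟨Sym2.Mem.other hwe, ?_, Sym2.other_spec hwe⟩⟩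
    rw [mem_Dst]
    refine ⟨?_, by rw [Sym2.other_spec hwe]; exact he.1⟩
    have h2 := hs e he.1
    rw [← Sym2.other_spec hwe, SimpleGraph.mem_edgeSet] at h2
    exact h2
  calc (s.filter P).card ≤ _ := Finset.card_le_card hsub
    _ ≤ ∑ w ∈ W, ((Dst G s w).image (fun y => s(w, y))).card := Finset.card_biUnion_le
    _ ≤ ∑ w ∈ W, (Dst G s w).card := Finset.sum_le_sum fun w _ => Finset.card_image_le

/-- Structure of an edge of `s` avoiding the whole neighbourhood of `v`. -/
lemma avoid_struct (v : V) : ∀ e ∈ s, (∀ w ∈ e, ¬ G.Adj v w) →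
    ∃ x y : V, e = s(x, y) ∧ (∀ p ∈ Dst G s v, G.Adj x p) ∧ y ∈ Dst G s x ∧ y ∉ Dst G s v := by
  intro e
  induction e using Sym2.ind with
  | _ a b =>
    intro he hav
    have hadj : G.Adj a b := (SimpleGraph.mem_edgeSet G).mp (hs _ he)
    have hna : ¬ G.Adj v a := hav a (Sym2.mem_mk_left a b)
    have hnb : ¬ G.Adj v b := hav b (Sym2.mem_mk_right a b)
    have hbD : b ∈ Dst G s a := (mem_Dst G).mpr ⟨hadj, he⟩
    have haD : a ∈ Dst G s b := (mem_Dst G).mpr ⟨hadj.symm, by rwa [Sym2.eq_swap]⟩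
    by_cases hca : c v = c a
    · have hcb : c v ≠ c b := by rw [hca]; exact hc hadj
      refine ⟨a, b, rfl, ?_, hbD, fun hmem => hnb ((mem_Dst G).mp hmem).1⟩
      intro p hp
      exact (adj_of_close G c hc s hs hcl hcb hnb hp haD).symm
    · refine ⟨b, a, Sym2.eq_swap, ?_, haD, fun hmem => hna ((mem_Dst G).mp hmem).1⟩
      intro p hp
      exact (adj_of_close G c hc s hs hcl hca hna hp hbD).symm

/-- The number of edges of `s` avoiding `N(v)` entirely. -/
lemma avoid_count (v b₀ : V) (hb₀ : b₀ ∈ Dst G s v) :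
    (s.filter (fun e => ∀ w ∈ e, ¬ G.Adj v w)).card ≤
      G.maxDegree * (G.maxDegree - (Dst G s v).card) := by
  set S' := (G.neighborFinset b₀).filter (fun x => ∀ p ∈ Dst G s v, G.Adj x p) with hS'
  have hsub : s.filter (fun e => ∀ w ∈ e, ¬ G.Adj v w) ⊆
      S'.biUnion (fun x => ((Dst G s x) \ (Dst G s v)).image (fun z => s(x, z))) := by
    intro e he
    rw [Finset.mem_filter] at he
    obtain ⟨x, y, heq, hx, hyx, hyv⟩ := avoid_struct G c hc s hs hcl v e he.1 he.2
    subst heq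
    rw [Finset.mem_biUnion]
    refine ⟨x, ?_, Finset.mem_image.mpr ⟨y, Finset.mem_sdiff.mpr ⟨hyx, hyv⟩, rfl⟩⟩
    rw [hS', Finset.mem_filter, SimpleGraph.mem_neighborFinset]
    exact ⟨(hx b₀ hb₀).symm, hx⟩
  have hper : ∀ x ∈ S', (((Dst G s x) \ (Dst G s v)).image (fun z => s(x, z))).card ≤
      G.maxDegree - (Dst G s v).card := by
    intro x hx
    rw [hS', Finset.mem_filter] at hx
    have hDvNx : Dst G s v ⊆ G.neighborFinset x := by
      intro p hp
      rw [SimpleGraph.mem_neighborFinset]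
      exact hx.2 p hp
    calc (((Dst G s x) \ (Dst G s v)).image (fun z => s(x, z))).card
        ≤ ((Dst G s x) \ (Dst G s v)).card := Finset.card_image_le
      _ ≤ ((G.neighborFinset x) \ (Dst G s v)).card :=
          Finset.card_le_card (Finset.sdiff_subset_sdiff (Dst_subset G s x) le_rfl)
      _ = G.degree x - (Dst G s v).card := by rw [Finset.card_sdiff_of_subset hDvNx]; rfl
      _ ≤ G.maxDegree - (Dst G s v).card :=
          Nat.sub_le_sub_right (G.degree_le_maxDegree x) _
  calc (s.filter (fun e => ∀ w ∈ e, ¬ G.Adj v w)).card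
      ≤ _ := Finset.card_le_card hsub
    _ ≤ ∑ x ∈ S', (((Dst G s x) \ (Dst G s v)).image (fun z => s(x, z))).card :=
        Finset.card_biUnion_le
    _ ≤ ∑ _x ∈ S', (G.maxDegree - (Dst G s v).card) := Finset.sum_le_sum hper
    _ = S'.card * (G.maxDegree - (Dst G s v).card) := by
        rw [Finset.sum_const, smul_eq_mul]
    _ ≤ G.maxDegree * (G.maxDegree - (Dst G s v).card) := by
        apply Nat.mul_le_mul_right
        calc S'.card ≤ (G.neighborFinset b₀).card := Finset.card_le_card (Finset.filter_subset _ _)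
          _ ≤ G.maxDegree := G.degree_le_maxDegree b₀


/-- The product-style count giving a vertex of near-maximum `s`-degree. -/
lemma prod_count (a₀ b₀ : V)
    (hmax : ∀ w : V, (Dst G s w).card ≤ (Dst G s a₀).card)
    (hb₀ : b₀ ∈ Dst G s a₀) :
    s.card ≤ (Dst G s a₀).card * G.maxDegree +
      (G.maxDegree - (Dst G s a₀).card) * (Dst G s a₀).card := by
  classical
  set M := (Dst G s a₀).card with hMdef
  set Δ := G.maxDegree with hΔdef
  set S : Finset V := (G.neighborFinset b₀).filter (fun x => ∀ p ∈ Dst G s a₀, G.Adj x p)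
    with hSdef
  have hq1dec : ∀ e : Sym2 V, Decidable (∃ w ∈ e, w ∈ S) := fun e => Classical.propDecidable _
  set q1 : Sym2 V → Prop := fun e => ∃ w ∈ e, w ∈ S with hq1
  set q2 : Sym2 V → Prop := fun e => ¬ q1 e ∧ ∃ w ∈ e, w ∈ Dst G s a₀ with hq2
  set q3 : Sym2 V → Prop := fun e => ∃ w ∈ e, w ∈ (G.neighborFinset a₀) \ (Dst G s a₀) with hq3
  have hcover : s ⊆ s.filter q1 ∪ s.filter q2 ∪ s.filter q3 := by
    intro e he
    by_cases h1 : q1 e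
    · exact Finset.mem_union_left _ (Finset.mem_union_left _ (Finset.mem_filter.mpr ⟨he, h1⟩))
    by_cases h2 : ∃ w ∈ e, w ∈ Dst G s a₀
    · exact Finset.mem_union_left _ (Finset.mem_union_right _
        (Finset.mem_filter.mpr ⟨he, h1, h2⟩))
    apply Finset.mem_union_right
    rw [Finset.mem_filter]
    refine ⟨he, ?_⟩
    by_cases h3 : ∃ w ∈ e, G.Adj a₀ w
    · obtain ⟨w, hwe, hwadj⟩ := h3
      exact ⟨w, hwe, Finset.mem_sdiff.mpr ⟨(SimpleGraph.mem_neighborFinset _ _ _).mpr hwadj,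
        fun hD => h2 ⟨w, hwe, hD⟩⟩⟩
    · push_neg at h3
      obtain ⟨x, y, heq, hx, hyx, hyv⟩ := avoid_struct G c hc s hs hcl a₀ e he h3
      exfalso
      apply h1
      refine ⟨x, ?_, ?_⟩
      · rw [heq]; exact Sym2.mem_mk_left x y
      · rw [hSdef, Finset.mem_filter, SimpleGraph.mem_neighborFinset]
        exact ⟨(hx b₀ hb₀).symm, hx⟩
  have hcard : s.card ≤ (s.filter q1).card + (s.filter q2).card + (s.filter q3).card := by
    calc s.card ≤ (s.filter q1 ∪ s.filter q2 ∪ s.filter q3).card := Finset.card_le_card hcover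
      _ ≤ (s.filter q1 ∪ s.filter q2).card + (s.filter q3).card := Finset.card_union_le _ _
      _ ≤ (s.filter q1).card + (s.filter q2).card + (s.filter q3).card := by
          have := Finset.card_union_le (s.filter q1) (s.filter q2)
          omega
  have hb1 : (s.filter q1).card ≤ S.card * M := by
    calc (s.filter q1).card ≤ ∑ w ∈ S, (Dst G s w).card := by
          apply card_filter_le_sum G c hc s hs hcl
          intro e he hP
          obtain ⟨w, hwe, hwS⟩ := hP
          exact ⟨w, hwS, hwe⟩
      _ ≤ ∑ _w ∈ S, M := Finset.sum_le_sum (fun w _ => hmax w)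
      _ = S.card * M := by rw [Finset.sum_const, smul_eq_mul]
  have hb2 : (s.filter q2).card ≤ M * (Δ - S.card) := by
    have hsub2 : s.filter q2 ⊆ (Dst G s a₀).biUnion
        (fun b => ((Dst G s b) \ S).image (fun z => s(b, z))) := by
      intro e he
      rw [Finset.mem_filter] at he
      obtain ⟨he, hn1, w, hwe, hwD⟩ := he
      rw [Finset.mem_biUnion]
      refine ⟨w, hwD, Finset.mem_image.mpr ⟨Sym2.Mem.other hwe, ?_, Sym2.other_spec hwe⟩⟩
      rw [Finset.mem_sdiff, mem_Dst]
      have hedge := hs e he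
      rw [← Sym2.other_spec hwe, SimpleGraph.mem_edgeSet] at hedge
      refine ⟨⟨hedge, by rw [Sym2.other_spec hwe]; exact he⟩, fun hS' => hn1 ?_⟩
      exact ⟨Sym2.Mem.other hwe, Sym2.other_mem hwe, hS'⟩
    have hper : ∀ b ∈ Dst G s a₀, (((Dst G s b) \ S).image (fun z => s(b, z))).card ≤ Δ - S.card := by
      intro b hbD
      have hSNb : S ⊆ G.neighborFinset b := by
        intro x hxS
        rw [hSdef, Finset.mem_filter] at hxS
        rw [SimpleGraph.mem_neighborFinset]
        exact (hxS.2 b hbD).symm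
      calc (((Dst G s b) \ S).image (fun z => s(b, z))).card
          ≤ ((Dst G s b) \ S).card := Finset.card_image_le
        _ ≤ ((G.neighborFinset b) \ S).card :=
            Finset.card_le_card (Finset.sdiff_subset_sdiff (Dst_subset G s b) le_rfl)
        _ = G.degree b - S.card := by rw [Finset.card_sdiff_of_subset hSNb]; rfl
        _ ≤ Δ - S.card := Nat.sub_le_sub_right (G.degree_le_maxDegree b) _
    calc (s.filter q2).card ≤ _ := Finset.card_le_card hsub2
      _ ≤ ∑ b ∈ Dst G s a₀, (((Dst G s b) \ S).image (fun z => s(b, z))).card :=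
          Finset.card_biUnion_le
      _ ≤ ∑ _b ∈ Dst G s a₀, (Δ - S.card) := Finset.sum_le_sum hper
      _ = M * (Δ - S.card) := by rw [Finset.sum_const, smul_eq_mul]
  have hb3 : (s.filter q3).card ≤ (Δ - M) * M := by
    have hDsubN : Dst G s a₀ ⊆ G.neighborFinset a₀ := Dst_subset G s a₀
    calc (s.filter q3).card ≤ ∑ w ∈ (G.neighborFinset a₀) \ (Dst G s a₀), (Dst G s w).card := by
          apply card_filter_le_sum G c hc s hs hcl
          intro e he hP
          obtain ⟨w, hwe, hwm⟩ := hP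
          exact ⟨w, hwm, hwe⟩
      _ ≤ ∑ _w ∈ (G.neighborFinset a₀) \ (Dst G s a₀), M := Finset.sum_le_sum (fun w _ => hmax w)
      _ = ((G.neighborFinset a₀) \ (Dst G s a₀)).card * M := by
          rw [Finset.sum_const, smul_eq_mul]
      _ = (G.degree a₀ - M) * M := by rw [Finset.card_sdiff_of_subset hDsubN]; rfl
      _ ≤ (Δ - M) * M := Nat.mul_le_mul_right _ (Nat.sub_le_sub_right (G.degree_le_maxDegree a₀) _)
  have hScard : S.card ≤ Δ := by
    calc S.card ≤ (G.neighborFinset b₀).card := Finset.card_le_card (Finset.filter_subset _ _)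
      _ ≤ Δ := G.degree_le_maxDegree b₀
  have hkey : S.card * M + M * (Δ - S.card) = M * Δ := by
    obtain ⟨k, hk⟩ : ∃ k, S.card + k = Δ := ⟨Δ - S.card, by omega⟩
    have hk2 : Δ - S.card = k := by omega
    rw [hk2, ← hk]; ring
  omega

/-- Averaging count used to find a good vertex on the other side. -/
lemma avg_count (a₀ b₀ : V)
    (hmax : ∀ w : V, (Dst G s w).card ≤ (Dst G s a₀).card)
    (hb₀ : b₀ ∈ Dst G s a₀) :
    s.card ≤ (∑ b ∈ Dst G s a₀, (Dst G s b).card)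
      + (G.maxDegree - (Dst G s a₀).card) * G.maxDegree
      + G.maxDegree * (G.maxDegree - (Dst G s a₀).card) := by
  classical
  set M := (Dst G s a₀).card with hMdef
  set Δ := G.maxDegree with hΔdef
  set p1 : Sym2 V → Prop := fun e => ∃ w ∈ e, w ∈ Dst G s a₀ with hp1
  set p2 : Sym2 V → Prop := fun e => ∃ w ∈ e, w ∈ (G.neighborFinset a₀) \ (Dst G s a₀) with hp2
  set p3 : Sym2 V → Prop := fun e => ∀ w ∈ e, ¬ G.Adj a₀ w with hp3
  have hcover : s ⊆ s.filter p1 ∪ s.filter p2 ∪ s.filter p3 := by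
    intro e he
    by_cases h1 : p1 e
    · exact Finset.mem_union_left _ (Finset.mem_union_left _ (Finset.mem_filter.mpr ⟨he, h1⟩))
    by_cases h3 : ∃ w ∈ e, G.Adj a₀ w
    · obtain ⟨w, hwe, hwadj⟩ := h3
      exact Finset.mem_union_left _ (Finset.mem_union_right _ (Finset.mem_filter.mpr ⟨he,
        ⟨w, hwe, Finset.mem_sdiff.mpr ⟨(SimpleGraph.mem_neighborFinset _ _ _).mpr hwadj,
          fun hD => h1 ⟨w, hwe, hD⟩⟩⟩⟩))
    · push_neg at h3
      exact Finset.mem_union_right _ (Finset.mem_filter.mpr ⟨he, h3⟩)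
  have hcard : s.card ≤ (s.filter p1).card + (s.filter p2).card + (s.filter p3).card := by
    calc s.card ≤ (s.filter p1 ∪ s.filter p2 ∪ s.filter p3).card := Finset.card_le_card hcover
      _ ≤ (s.filter p1 ∪ s.filter p2).card + (s.filter p3).card := Finset.card_union_le _ _
      _ ≤ (s.filter p1).card + (s.filter p2).card + (s.filter p3).card := by
          have := Finset.card_union_le (s.filter p1) (s.filter p2)
          omega
  have hb1 : (s.filter p1).card ≤ ∑ b ∈ Dst G s a₀, (Dst G s b).card := by
    apply card_filter_le_sum G c hc s hs hcl
    intro e he hP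
    obtain ⟨w, hwe, hwm⟩ := hP
    exact ⟨w, hwm, hwe⟩
  have hb2 : (s.filter p2).card ≤ (Δ - M) * Δ := by
    have hDsubN : Dst G s a₀ ⊆ G.neighborFinset a₀ := Dst_subset G s a₀
    calc (s.filter p2).card ≤ ∑ w ∈ (G.neighborFinset a₀) \ (Dst G s a₀), (Dst G s w).card := by
          apply card_filter_le_sum G c hc s hs hcl
          intro e he hP
          obtain ⟨w, hwe, hwm⟩ := hP
          exact ⟨w, hwm, hwe⟩
      _ ≤ ∑ _w ∈ (G.neighborFinset a₀) \ (Dst G s a₀), Δ :=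
          Finset.sum_le_sum (fun w _ => Dst_card_le G s w)
      _ = ((G.neighborFinset a₀) \ (Dst G s a₀)).card * Δ := by
          rw [Finset.sum_const, smul_eq_mul]
      _ = (G.degree a₀ - M) * Δ := by rw [Finset.card_sdiff_of_subset hDsubN]; rfl
      _ ≤ (Δ - M) * Δ := Nat.mul_le_mul_right _ (Nat.sub_le_sub_right (G.degree_le_maxDegree a₀) _)
  have hb3 : (s.filter p3).card ≤ Δ * (Δ - M) := avoid_count G c hc s hs hcl a₀ b₀ hb₀
  omega


/-- The main counting lemma: many vertices in `N(v)` have large `s`-degree. -/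
lemma count_high (v : V) (ε u δ : ℝ)
    (hε0 : 0 ≤ ε) (hεu : ε ≤ u) (hu0 : 0 ≤ u) (hu18 : u ≤ 1/8)
    (h3uδ : 3*u ≤ δ) (hδ0 : 0 ≤ δ) (hδ1 : δ ≤ 1) (hδδ : δ * δ = 8 * u)
    (hΔ1 : 1 ≤ (G.maxDegree : ℝ))
    (hsize : (1 - ε) * (G.maxDegree : ℝ) ^ 2 ≤ (s.card : ℝ))
    (hv : (1 - 3*u) * (G.maxDegree : ℝ) ≤ ((Dst G s v).card : ℝ)) :
    (1 - δ) * (G.maxDegree : ℝ) ≤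
      (((G.neighborFinset v).filter
        (fun w => (1 - δ) * (G.maxDegree : ℝ) ≤ ((Dst G s w).card : ℝ))).card : ℝ) := by
  classical
  have hdvpos : 0 < (Dst G s v).card := by
    rcases Nat.eq_zero_or_pos (Dst G s v).card with h | h
    · rw [h] at hv
      push_cast at hv
      nlinarith
    · exact h
  obtain ⟨b₀, hb₀⟩ := Finset.card_pos.mp hdvpos
  have hdvΔ : (Dst G s v).card ≤ G.maxDegree := Dst_card_le G s v
  -- natural number count
  have hsplitn : (s.filter (fun e => ∃ w ∈ e, G.Adj v w)).card
      + (s.filter (fun e => ¬ ∃ w ∈ e, G.Adj v w)).card = s.card :=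
    Finset.card_filter_add_card_filter_not _
  have hfeq : s.filter (fun e => ¬ ∃ w ∈ e, G.Adj v w)
      = s.filter (fun e => ∀ w ∈ e, ¬ G.Adj v w) := by
    apply Finset.filter_congr
    intro e _
    simp
  have havoid : (s.filter (fun e => ¬ ∃ w ∈ e, G.Adj v w)).card
      ≤ G.maxDegree * (G.maxDegree - (Dst G s v).card) := by
    rw [hfeq]; exact avoid_count G c hc s hs hcl v b₀ hb₀
  have hmeets : (s.filter (fun e => ∃ w ∈ e, G.Adj v w)).card
      ≤ ∑ w ∈ G.neighborFinset v, (Dst G s w).card := by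
    apply card_filter_le_sum G c hc s hs hcl
    intro e _ hP
    obtain ⟨w, hwe, hadj⟩ := hP
    exact ⟨w, (SimpleGraph.mem_neighborFinset _ _ _).mpr hadj, hwe⟩
  have hnat : s.card ≤ (∑ w ∈ G.neighborFinset v, (Dst G s w).card)
      + G.maxDegree * (G.maxDegree - (Dst G s v).card) := by omega
  -- real version
  set ΔR := (G.maxDegree : ℝ) with hΔR
  have hA : (1 - ε) * ΔR^2 - ΔR * (3*u*ΔR) ≤ ∑ w ∈ G.neighborFinset v, ((Dst G s w).card : ℝ) := by
    have hcast : (s.card : ℝ) ≤ (∑ w ∈ G.neighborFinset v, ((Dst G s w).card : ℝ))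
        + ΔR * (ΔR - ((Dst G s v).card : ℝ)) := by
      have := hnat
      have hc2 : ((G.maxDegree * (G.maxDegree - (Dst G s v).card) : ℕ) : ℝ)
          = ΔR * (ΔR - ((Dst G s v).card : ℝ)) := by
        push_cast [Nat.cast_sub hdvΔ]
        ring
      calc (s.card : ℝ) ≤ ((∑ w ∈ G.neighborFinset v, (Dst G s w).card : ℕ) : ℝ)
            + ((G.maxDegree * (G.maxDegree - (Dst G s v).card) : ℕ) : ℝ) := by
            exact_mod_cast this
        _ = _ := by rw [hc2]; push_cast; ring
    have hgap : ΔR - ((Dst G s v).card : ℝ) ≤ 3*u*ΔR := by linarith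
    have hmul := mul_le_mul_of_nonneg_left hgap (by linarith : (0:ℝ) ≤ ΔR)
    linarith
  set Y' := (G.neighborFinset v).filter
      (fun w => (1 - δ) * ΔR ≤ ((Dst G s w).card : ℝ)) with hY'def
  set Z := (G.neighborFinset v).filter
      (fun w => ¬ ((1 - δ) * ΔR ≤ ((Dst G s w).card : ℝ))) with hZdef
  have hYZ : Y'.card + Z.card = (G.neighborFinset v).card :=
    Finset.card_filter_add_card_filter_not _
  have hsum : ∑ w ∈ G.neighborFinset v, ((Dst G s w).card : ℝ)
      = (∑ w ∈ Y', ((Dst G s w).card : ℝ)) + (∑ w ∈ Z, ((Dst G s w).card : ℝ)) :=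
    (Finset.sum_filter_add_sum_filter_not _ _ _).symm
  have hS1 : ∑ w ∈ Y', ((Dst G s w).card : ℝ) ≤ (Y'.card : ℝ) * ΔR := by
    calc ∑ w ∈ Y', ((Dst G s w).card : ℝ) ≤ ∑ _w ∈ Y', ΔR :=
          Finset.sum_le_sum (fun w _ => by rw [hΔR]; exact_mod_cast Dst_card_le G s w)
      _ = (Y'.card : ℝ) * ΔR := by rw [Finset.sum_const, nsmul_eq_mul]
  rcases Z.eq_empty_or_nonempty with hZe | hZne
  · have hYfull : Y'.card = (G.neighborFinset v).card := by
      rw [← hYZ, hZe]; simp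
    have hdeg : (Dst G s v).card ≤ (G.neighborFinset v).card := Dst_card_le_degree G s v
    have h1 : ((Dst G s v).card : ℝ) ≤ (Y'.card : ℝ) := by
      rw [hYfull]; exact_mod_cast hdeg
    have hmul : 3*u*ΔR ≤ δ*ΔR := mul_le_mul_of_nonneg_right h3uδ (by linarith)
    linarith
  · by_contra hY
    push_neg at hY
    have hS2 : ∑ w ∈ Z, ((Dst G s w).card : ℝ) < (Z.card : ℝ) * ((1 - δ) * ΔR) := by
      calc ∑ w ∈ Z, ((Dst G s w).card : ℝ) < ∑ _w ∈ Z, (1 - δ) * ΔR := by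
            apply Finset.sum_lt_sum_of_nonempty hZne
            intro w hw
            have := (Finset.mem_filter.mp hw).2
            push_neg at this
            exact this
        _ = (Z.card : ℝ) * ((1 - δ) * ΔR) := by rw [Finset.sum_const, nsmul_eq_mul]
    have hNBΔ : ((G.neighborFinset v).card : ℝ) ≤ ΔR := by
      rw [hΔR]; exact_mod_cast G.degree_le_maxDegree v
    have hyzr : (Y'.card : ℝ) + (Z.card : ℝ) ≤ ΔR := by
      have : ((Y'.card + Z.card : ℕ) : ℝ) ≤ ΔR := by rw [hYZ]; exact hNBΔ
      push_cast at this
      linarith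
    have hcoef : (0:ℝ) ≤ (1 - δ) * ΔR := mul_nonneg (by linarith) (by linarith)
    have e3 : (Z.card : ℝ) * ((1 - δ) * ΔR) ≤ (ΔR - (Y'.card : ℝ)) * ((1 - δ) * ΔR) :=
      mul_le_mul_of_nonneg_right (by linarith) hcoef
    have e5 : (Y'.card : ℝ) * (δ * ΔR) ≤ ((1 - δ) * ΔR) * (δ * ΔR) :=
      mul_le_mul_of_nonneg_right hY.le (mul_nonneg hδ0 (by linarith))
    have k1 : ∑ w ∈ G.neighborFinset v, ((Dst G s w).card : ℝ)
        < (Y'.card : ℝ) * ΔR + (ΔR - (Y'.card : ℝ)) * ((1 - δ) * ΔR) := by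
      rw [hsum]; linarith
    have k3 : (Y'.card : ℝ) * ΔR + (ΔR - (Y'.card : ℝ)) * ((1 - δ) * ΔR)
        = (Y'.card : ℝ) * (δ * ΔR) + (1 - δ) * ΔR^2 := by ring
    have k5 : ((1 - δ) * ΔR) * (δ * ΔR) + (1 - δ) * ΔR^2 = (1 - δ*δ) * ΔR^2 := by ring
    have kfin : ∑ w ∈ G.neighborFinset v, ((Dst G s w).card : ℝ) < (1 - 8*u) * ΔR^2 := by
      rw [← hδδ]
      calc ∑ w ∈ G.neighborFinset v, ((Dst G s w).card : ℝ)
          < (Y'.card : ℝ) * ΔR + (ΔR - (Y'.card : ℝ)) * ((1 - δ) * ΔR) := k1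
        _ = (Y'.card : ℝ) * (δ * ΔR) + (1 - δ) * ΔR^2 := k3
        _ ≤ ((1 - δ) * ΔR) * (δ * ΔR) + (1 - δ) * ΔR^2 := by linarith
        _ = (1 - δ*δ) * ΔR^2 := k5
    have hu4 : 0 ≤ u * ΔR^2 := mul_nonneg hu0 (sq_nonneg ΔR)
    have huε : 0 ≤ (u - ε) * ΔR^2 := mul_nonneg (by linarith) (sq_nonneg ΔR)
    nlinarith [hA, kfin]


set_option maxHeartbeats 1600000 in
/-- Main case of the theorem: nontrivial `Δ` and `δ < 1`. -/
lemma main_case (ε u δ : ℝ)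
    (hε0 : 0 ≤ ε) (hεu : ε ≤ u) (hεuu : ε ≤ u * u) (hu0 : 0 ≤ u)
    (h3uδ : 3*u ≤ δ) (hδ0 : 0 ≤ δ) (hδ1 : δ ≤ 1) (hδδ : δ * δ = 8 * u)
    (hΔ1 : 1 ≤ (G.maxDegree : ℝ))
    (hsize : (1 - ε) * (G.maxDegree : ℝ)^2 ≤ (s.card : ℝ)) :
    ∃ r : ℕ, (1 - δ) * (G.maxDegree : ℝ) ≤ (r : ℝ) ∧
      ∃ S T : Finset V, Disjoint S T ∧ S.card = r ∧ T.card = r ∧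
        ∀ x ∈ S, ∀ y ∈ T, G.Adj x y := by
  classical
  have hu18 : u ≤ 1/8 := by nlinarith
  have hε18 : ε ≤ 1/8 := le_trans hεu hu18
  have hΔsq : (1:ℝ) ≤ (G.maxDegree : ℝ)^2 := by nlinarith
  have hspos : (0:ℝ) < (s.card : ℝ) := by nlinarith
  have hsne : s.Nonempty := Finset.card_pos.mp (by exact_mod_cast hspos)
  obtain ⟨e₀, he₀⟩ := hsne
  obtain ⟨x₀, y₀, hxy₀⟩ := Sym2.exists.mp ⟨e₀, he₀⟩
  haveI : Nonempty V := ⟨x₀⟩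
  obtain ⟨a₀, -, hmax'⟩ := Finset.exists_max_image Finset.univ (fun w => (Dst G s w).card)
    Finset.univ_nonempty
  have hmax : ∀ w, (Dst G s w).card ≤ (Dst G s a₀).card := fun w => hmax' w (Finset.mem_univ w)
  have hMpos : 0 < (Dst G s a₀).card := by
    have hy : y₀ ∈ Dst G s x₀ :=
      (mem_Dst G).mpr ⟨(SimpleGraph.mem_edgeSet G).mp (hs _ hxy₀), hxy₀⟩
    calc 0 < (Dst G s x₀).card := Finset.card_pos.mpr ⟨y₀, hy⟩
      _ ≤ _ := hmax x₀
  obtain ⟨b₀, hb₀⟩ := Finset.card_pos.mp hMpos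
  have hMΔ : (Dst G s a₀).card ≤ G.maxDegree := Dst_card_le G s a₀
  have hMΔR : ((Dst G s a₀).card : ℝ) ≤ (G.maxDegree : ℝ) := by exact_mod_cast hMΔ
  have hΔ0 : (0:ℝ) ≤ (G.maxDegree : ℝ) := by linarith
  -- product bound : near-maximum degree vertex
  have hprod := prod_count G c hc s hs hcl a₀ b₀ hmax hb₀
  have hMlow : (1 - u) * (G.maxDegree : ℝ) ≤ ((Dst G s a₀).card : ℝ) := by
    have hcast : (s.card:ℝ) ≤ ((Dst G s a₀).card : ℝ) * (G.maxDegree : ℝ)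
        + ((G.maxDegree : ℝ) - ((Dst G s a₀).card : ℝ)) * ((Dst G s a₀).card : ℝ) := by
      calc (s.card:ℝ) ≤ (((Dst G s a₀).card * G.maxDegree
            + (G.maxDegree - (Dst G s a₀).card) * (Dst G s a₀).card : ℕ) : ℝ) := by
            exact_mod_cast hprod
        _ = _ := by push_cast [Nat.cast_sub hMΔ]; ring
    by_contra hcon
    push_neg at hcon
    have h1 : ((G.maxDegree : ℝ) - ((Dst G s a₀).card : ℝ))
        * ((G.maxDegree : ℝ) - ((Dst G s a₀).card : ℝ)) ≤ ε * (G.maxDegree : ℝ)^2 := by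
      nlinarith
    have h2 : u * (G.maxDegree : ℝ) < (G.maxDegree : ℝ) - ((Dst G s a₀).card : ℝ) := by
      nlinarith
    have h3 : (0:ℝ) ≤ u * (G.maxDegree : ℝ) := mul_nonneg hu0 hΔ0
    nlinarith [mul_self_lt_mul_self h3 h2, mul_le_mul_of_nonneg_right hεuu (sq_nonneg (G.maxDegree : ℝ))]
  -- averaging : good vertex on the other side
  have havg := avg_count G c hc s hs hcl a₀ b₀ hmax hb₀
  have hsumD : (1 - 3*u) * (G.maxDegree : ℝ)^2 ≤ ∑ b ∈ Dst G s a₀, ((Dst G s b).card : ℝ) := by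
    have hgap : (G.maxDegree : ℝ) - ((Dst G s a₀).card:ℝ) ≤ u * (G.maxDegree : ℝ) := by linarith
    have hcast : (s.card:ℝ) ≤ (∑ b ∈ Dst G s a₀, ((Dst G s b).card : ℝ))
        + ((G.maxDegree : ℝ) - ((Dst G s a₀).card:ℝ)) * (G.maxDegree : ℝ)
        + (G.maxDegree : ℝ) * ((G.maxDegree : ℝ) - ((Dst G s a₀).card:ℝ)) := by
      calc (s.card:ℝ) ≤ (((∑ b ∈ Dst G s a₀, (Dst G s b).card)
            + (G.maxDegree - (Dst G s a₀).card) * G.maxDegree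
            + G.maxDegree * (G.maxDegree - (Dst G s a₀).card) : ℕ) : ℝ) := by
            exact_mod_cast havg
        _ = _ := by push_cast [Nat.cast_sub hMΔ]; ring
    have h2 : ((G.maxDegree : ℝ) - ((Dst G s a₀).card:ℝ)) * (G.maxDegree : ℝ)
        ≤ u * (G.maxDegree : ℝ)^2 := by
      calc ((G.maxDegree : ℝ) - ((Dst G s a₀).card:ℝ)) * (G.maxDegree : ℝ)
          ≤ (u * (G.maxDegree : ℝ)) * (G.maxDegree : ℝ) :=
            mul_le_mul_of_nonneg_right hgap hΔ0
        _ = u * (G.maxDegree : ℝ)^2 := by ring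
    have h3 : (G.maxDegree : ℝ) * ((G.maxDegree : ℝ) - ((Dst G s a₀).card:ℝ))
        ≤ u * (G.maxDegree : ℝ)^2 := by
      calc (G.maxDegree : ℝ) * ((G.maxDegree : ℝ) - ((Dst G s a₀).card:ℝ))
          ≤ (G.maxDegree : ℝ) * (u * (G.maxDegree : ℝ)) :=
            mul_le_mul_of_nonneg_left hgap hΔ0
        _ = u * (G.maxDegree : ℝ)^2 := by ring
    have h4 : (0:ℝ) ≤ (u - ε) * (G.maxDegree : ℝ)^2 := mul_nonneg (by linarith) (sq_nonneg _)
    nlinarith [hcast, hsize, h2, h3, h4]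
  obtain ⟨b₁, hb₁D, hb₁⟩ : ∃ b ∈ Dst G s a₀,
      (1 - 3*u) * (G.maxDegree : ℝ) ≤ ((Dst G s b).card : ℝ) := by
    by_contra hcon
    push_neg at hcon
    have hlt : ∑ b ∈ Dst G s a₀, ((Dst G s b).card:ℝ)
        < ∑ _b ∈ Dst G s a₀, (1-3*u) * (G.maxDegree : ℝ) :=
      Finset.sum_lt_sum_of_nonempty ⟨b₀, hb₀⟩ (fun b hb => hcon b hb)
    rw [Finset.sum_const, nsmul_eq_mul] at hlt
    have h13u : (0:ℝ) ≤ 1 - 3*u := by linarith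
    have hmul : ((Dst G s a₀).card:ℝ) * ((1-3*u) * (G.maxDegree : ℝ))
        ≤ (G.maxDegree : ℝ) * ((1-3*u) * (G.maxDegree : ℝ)) :=
      mul_le_mul_of_nonneg_right hMΔR (mul_nonneg h13u hΔ0)
    nlinarith
  have hv₀ : (1 - 3*u) * (G.maxDegree : ℝ) ≤ ((Dst G s a₀).card : ℝ) := by
    have : (0:ℝ) ≤ u * (G.maxDegree : ℝ) := mul_nonneg hu0 hΔ0
    linarith
  have hY := count_high G c hc s hs hcl a₀ ε u δ hε0 hεu hu0 hu18 h3uδ hδ0 hδ1 hδδ hΔ1 hsize hv₀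
  have hX := count_high G c hc s hs hcl b₁ ε u δ hε0 hεu hu0 hu18 h3uδ hδ0 hδ1 hδδ hΔ1 hsize hb₁
  set Y' := (G.neighborFinset a₀).filter
      (fun w => (1 - δ) * (G.maxDegree : ℝ) ≤ ((Dst G s w).card : ℝ)) with hY'def
  set X' := (G.neighborFinset b₁).filter
      (fun w => (1 - δ) * (G.maxDegree : ℝ) ≤ ((Dst G s w).card : ℝ)) with hX'def
  have hab₁ : G.Adj a₀ b₁ := ((mem_Dst G).mp hb₁D).1
  by_cases hAB : ∀ x ∈ X', ∀ y ∈ Y', G.Adj x y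
  · refine ⟨min X'.card Y'.card, ?_, ?_⟩
    · rw [Nat.cast_min]; exact le_min hX hY
    obtain ⟨S, hSsub, hScard⟩ := Finset.exists_subset_card_eq (min_le_left X'.card Y'.card)
    obtain ⟨T, hTsub, hTcard⟩ := Finset.exists_subset_card_eq (min_le_right X'.card Y'.card)
    refine ⟨S, T, ?_, hScard, hTcard, fun x hxS y hyT => hAB x (hSsub hxS) y (hTsub hyT)⟩
    apply Finset.disjoint_left.mpr
    intro w hwS hwT
    have h1 : G.Adj b₁ w :=
      (SimpleGraph.mem_neighborFinset _ _ _).mp (Finset.mem_filter.mp (hSsub hwS)).1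
    have h2 : G.Adj a₀ w :=
      (SimpleGraph.mem_neighborFinset _ _ _).mp (Finset.mem_filter.mp (hTsub hwT)).1
    exact fin2_false (c a₀) (c b₁) (c w) (hc hab₁) (hc h2).symm (hc h1).symm
  · push_neg at hAB
    obtain ⟨x, hxX, y, hyY, hnxy⟩ := hAB
    have hxb₁ : G.Adj b₁ x :=
      (SimpleGraph.mem_neighborFinset _ _ _).mp (Finset.mem_filter.mp hxX).1
    have hya₀ : G.Adj a₀ y :=
      (SimpleGraph.mem_neighborFinset _ _ _).mp (Finset.mem_filter.mp hyY).1
    have hdx : (1 - δ) * (G.maxDegree : ℝ) ≤ ((Dst G s x).card : ℝ) :=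
      (Finset.mem_filter.mp hxX).2
    have hdy : (1 - δ) * (G.maxDegree : ℝ) ≤ ((Dst G s y).card : ℝ) :=
      (Finset.mem_filter.mp hyY).2
    have hcxy : c x ≠ c y :=
      fin2_ne (c a₀) (c b₁) (c x) (c y) (hc hab₁) (hc hxb₁).symm (hc hya₀).symm
    have hadjall : ∀ p ∈ Dst G s x, ∀ q ∈ Dst G s y, G.Adj p q := fun p hp q hq =>
      adj_of_close G c hc s hs hcl hcxy hnxy hp hq
    refine ⟨min (Dst G s x).card (Dst G s y).card, ?_, ?_⟩
    · rw [Nat.cast_min]; exact le_min hdx hdy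
    obtain ⟨S, hSsub, hScard⟩ :=
      Finset.exists_subset_card_eq (min_le_left (Dst G s x).card (Dst G s y).card)
    obtain ⟨T, hTsub, hTcard⟩ :=
      Finset.exists_subset_card_eq (min_le_right (Dst G s x).card (Dst G s y).card)
    refine ⟨S, T, ?_, hScard, hTcard, fun p hpS q hqT => hadjall p (hSsub hpS) q (hTsub hqT)⟩
    apply Finset.disjoint_left.mpr
    intro w hwS hwT
    have h1 : G.Adj x w := ((mem_Dst G).mp (hSsub hwS)).1
    have h2 : G.Adj y w := ((mem_Dst G).mp (hTsub hwT)).1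
    exact fin2_false (c x) (c y) (c w) hcxy (hc h1).symm (hc h2).symm

end Close

end Stmt9Aux

/-- Stability: for `ε ∈ [0,1]`, if `G` is a bipartite graph with
`ω(L(G)²) ≥ (1−ε)Δ(G)²` (witnessed by a set of edges pairwise at distance at
most 2), then `G` contains a complete bipartite subgraph `K_{r,r}` with
`r ≥ (1 − √8·ε^{1/4})·Δ(G)`. -/
theorem stmt9 {V : Type*} [Fintype V] (G : SimpleGraph V) [DecidableRel G.Adj]
    (hbip : G.Colorable 2) (ε : ℝ) (hε : 0 ≤ ε ∧ ε ≤ 1)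
    (s : Finset (Sym2 V)) (hs : ∀ e ∈ s, e ∈ G.edgeSet)
    (hcl : ∀ e ∈ s, ∀ f ∈ s, EdgesClose G e f)
    (hsize : (1 - ε) * (G.maxDegree : ℝ) ^ 2 ≤ (s.card : ℝ)) :
    ∃ r : ℕ, (1 - Real.sqrt 8 * ε ^ ((1 : ℝ) / 4)) * (G.maxDegree : ℝ) ≤ (r : ℝ) ∧
      ∃ S T : Finset V, Disjoint S T ∧ S.card = r ∧ T.card = r ∧
        ∀ x ∈ S, ∀ y ∈ T, G.Adj x y := by
  classical
  by_cases hcrit : (1 - Real.sqrt 8 * ε ^ ((1 : ℝ) / 4)) * (G.maxDegree : ℝ) ≤ 0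
  · exact ⟨0, by simpa using hcrit, ∅, ∅, by simp, rfl, rfl, by simp⟩
  · push_neg at hcrit
    set δ := Real.sqrt 8 * ε ^ ((1 : ℝ) / 4) with hδdef
    set u := Real.sqrt ε with hudef
    have hε0 := hε.1
    have hε1 := hε.2
    have hu0 : 0 ≤ u := Real.sqrt_nonneg ε
    have hδ0 : 0 ≤ δ := mul_nonneg (Real.sqrt_nonneg 8) (Real.rpow_nonneg hε0 _)
    have hΔnn : (0:ℝ) ≤ (G.maxDegree : ℝ) := Nat.cast_nonneg _
    have hΔpos : (0:ℝ) < (G.maxDegree : ℝ) := by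
      rcases eq_or_lt_of_le hΔnn with h | h
      · rw [← h, mul_zero] at hcrit
        exact absurd hcrit (lt_irrefl 0)
      · exact h
    have hΔ1 : (1:ℝ) ≤ (G.maxDegree : ℝ) := by
      have h1 : 0 < G.maxDegree := by exact_mod_cast hΔpos
      exact_mod_cast h1
    have hδlt1 : δ < 1 := by
      by_contra h
      push_neg at h
      have : (1 - δ) * (G.maxDegree : ℝ) ≤ 0 :=
        mul_nonpos_of_nonpos_of_nonneg (by linarith) hΔnn
      linarith
    have hδ1 : δ ≤ 1 := hδlt1.le
    have huu : u * u = ε := Real.mul_self_sqrt hε0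
    have hεuu : ε ≤ u * u := le_of_eq huu.symm
    have hu1 : u ≤ 1 := by
      rw [hudef]
      calc Real.sqrt ε ≤ Real.sqrt 1 := Real.sqrt_le_sqrt hε1
        _ = 1 := Real.sqrt_one
    have hεu : ε ≤ u := by nlinarith
    have hδδ : δ * δ = 8 * u := by
      have h8 : Real.sqrt 8 * Real.sqrt 8 = 8 := Real.mul_self_sqrt (by norm_num)
      have hq : ε ^ ((1:ℝ)/4) * ε ^ ((1:ℝ)/4) = Real.sqrt ε := by
        rw [← Real.rpow_add' hε0 (by norm_num), Real.sqrt_eq_rpow]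
        norm_num
      calc δ * δ = (Real.sqrt 8 * Real.sqrt 8) * (ε ^ ((1:ℝ)/4) * ε ^ ((1:ℝ)/4)) := by
            rw [hδdef]; ring
        _ = 8 * u := by rw [h8, hq, hudef]
    have h3uδ : 3 * u ≤ δ := by nlinarith
    obtain ⟨C⟩ := hbip
    exact Stmt9Aux.main_case G (fun v => C v) (fun {a b} hab => C.valid hab) s hs hcl
      ε u δ hε0 hεu hεuu hu0 h3uδ hδ0 hδ1 hδδ hΔ1 hsize
end

section
/- Let G be a graph, H a subgraph of G whose edge set is a clique in L(G)², x a vertex of maximum degree in H, and y a neighbor of x in H maximizing d_H(y). Then |E(H)| ≤ d_H(x)·(σ_G(H) − d_H(x) + d_H(y)), where σ_G(H) = max_{uv ∈ E(H)}(d_G(u)+d_G(v)). -/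
/-- Let `G` be a graph, `H` a subgraph of `G` whose edge set is a clique in
`L(G)²`, `x` a vertex of maximum degree in `H` and `y` a neighbor of `x` in `H`
maximizing `d_H(y)`.  Then `|E(H)| ≤ d_H(x)·(σ_G(H) − d_H(x) + d_H(y))`. -/
theorem stmt11 {V : Type*} [Fintype V] (G : SimpleGraph V) (H : G.Subgraph)
    (hclique : ∀ e ∈ H.edgeSet, ∀ f ∈ H.edgeSet, EdgesClose G e f)
    (x y : V) (hxy : H.Adj x y)
    (hx : ∀ v, (H.neighborSet v).ncard ≤ (H.neighborSet x).ncard)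
    (hy : ∀ z, H.Adj x z → (H.neighborSet z).ncard ≤ (H.neighborSet y).ncard)
    (σ : ℕ)
    (hσ : IsGreatest {n : ℕ | ∃ u v, H.Adj u v ∧
      (G.neighborSet u).ncard + (G.neighborSet v).ncard = n} σ) :
    H.edgeSet.ncard ≤
      (H.neighborSet x).ncard *
        (σ - (H.neighborSet x).ncard + (H.neighborSet y).ncard) := by
  classical
  have hGxy : G.Adj x y := H.adj_sub hxy
  set G' := H.spanningCoe with hG'
  have hedge : G'.edgeSet = H.edgeSet := rfl
  have hnbr : ∀ v, G'.neighborSet v = H.neighborSet v := fun _ => rfl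
  -- the covering set
  set A : Finset V := G.neighborFinset x ∪ G.neighborFinset y with hA
  -- degrees as ncard
  have hdeg : ∀ v, G'.degree v = (H.neighborSet v).ncard := by
    intro v
    rw [SimpleGraph.degree, SimpleGraph.neighborFinset, ← hnbr v,
      Set.ncard_eq_toFinset_card']
  -- edge count
  have hcard : H.edgeSet.ncard = G'.edgeFinset.card := by
    rw [← hedge, SimpleGraph.edgeFinset, Set.ncard_eq_toFinset_card']
  -- every edge is incident to a vertex of A
  have hcover : G'.edgeFinset ⊆ A.biUnion (fun v => G'.incidenceFinset v) := by
    intro e he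
    rw [SimpleGraph.mem_edgeFinset, hedge] at he
    have hxyE : s(x, y) ∈ H.edgeSet := hxy
    obtain ⟨u, v, hu, hv, hcase⟩ := hclique e he _ hxyE
    have huA : u ∈ A := by
      rw [hA, Finset.mem_union, SimpleGraph.mem_neighborFinset,
        SimpleGraph.mem_neighborFinset]
      rcases Sym2.mem_iff.mp hv with rfl | rfl
      · rcases hcase with rfl | h
        · exact Or.inr hGxy.symm
        · exact Or.inl h.symm
      · rcases hcase with rfl | h
        · exact Or.inl hGxy
        · exact Or.inr h.symm
    refine Finset.mem_biUnion.mpr ⟨u, huA, ?_⟩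
    rw [SimpleGraph.mem_incidenceFinset]
    exact ⟨hedge ▸ he, hu⟩
  have hsum : G'.edgeFinset.card ≤ ∑ v ∈ A, (H.neighborSet v).ncard := by
    calc G'.edgeFinset.card ≤ (A.biUnion (fun v => G'.incidenceFinset v)).card :=
          Finset.card_le_card hcover
      _ ≤ ∑ v ∈ A, (G'.incidenceFinset v).card := Finset.card_biUnion_le
      _ = ∑ v ∈ A, (H.neighborSet v).ncard := by
          refine Finset.sum_congr rfl fun v _ => ?_
          rw [SimpleGraph.card_incidenceFinset_eq_degree, hdeg]
  -- B := H-neighborhood of x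
  set B : Finset V := (H.neighborSet x).toFinset with hB
  have hBA : B ⊆ A := by
    intro v hvB
    rw [hB, Set.mem_toFinset] at hvB
    rw [hA, Finset.mem_union, SimpleGraph.mem_neighborFinset]
    exact Or.inl (H.adj_sub hvB)
  have hBcard : B.card = (H.neighborSet x).ncard :=
    (Set.ncard_eq_toFinset_card' _).symm
  have hAσ : A.card ≤ σ := by
    have h1 : A.card ≤ (G.neighborFinset x).card + (G.neighborFinset y).card :=
      Finset.card_union_le _ _
    have h2 : (G.neighborSet x).ncard + (G.neighborSet y).ncard ≤ σ :=
      hσ.2 ⟨x, y, hxy, rfl⟩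
    rw [SimpleGraph.neighborFinset, SimpleGraph.neighborFinset,
      ← Set.ncard_eq_toFinset_card', ← Set.ncard_eq_toFinset_card'] at h1
    omega
  -- split the sum
  have hsplit : ∑ v ∈ A, (H.neighborSet v).ncard
      = ∑ v ∈ A \ B, (H.neighborSet v).ncard + ∑ v ∈ B, (H.neighborSet v).ncard :=
    (Finset.sum_sdiff hBA).symm
  have hsumB : ∑ v ∈ B, (H.neighborSet v).ncard
      ≤ B.card * (H.neighborSet y).ncard := by
    refine Finset.sum_le_card_nsmul _ _ _ fun v hv => ?_
    rw [hB, Set.mem_toFinset] at hv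
    exact hy v hv
  have hsumAB : ∑ v ∈ A \ B, (H.neighborSet v).ncard
      ≤ (A.card - B.card) * (H.neighborSet x).ncard := by
    have := Finset.sum_le_card_nsmul (A \ B) (fun v => (H.neighborSet v).ncard)
      ((H.neighborSet x).ncard) (fun v _ => hx v)
    rwa [Finset.card_sdiff_of_subset hBA] at this
  have hBle : B.card ≤ A.card := Finset.card_le_card hBA
  rw [hcard, ← hBcard]
  rw [← hBcard] at hsumAB
  calc G'.edgeFinset.card ≤ ∑ v ∈ A, (H.neighborSet v).ncard := hsum
    _ ≤ (A.card - B.card) * B.card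
        + B.card * (H.neighborSet y).ncard := by rw [hsplit]; omega
    _ ≤ (σ - B.card) * B.card
        + B.card * (H.neighborSet y).ncard := by
        have h3 : A.card - B.card ≤ σ - B.card := Nat.sub_le_sub_right hAσ _
        exact Nat.add_le_add_right (Nat.mul_le_mul_right _ h3) _
    _ = B.card * (σ - B.card + (H.neighborSet y).ncard) := by ring
end

section
/- For each positive integer k, let G_k be the blow-up of the 5-cycle where each vertex is replaced by an independent set of k vertices (two vertices adjacent iff their originals were adjacent in C₅). Then Δ(G_k) = 2k and the entire edge set E(G_k), of size 5k², forms a clique in L(G_k)²; hence ω(L(G_k)²) ≥ (5/4)·Δ(G_k)². -/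
/-- The blow-up of the 5-cycle by independent sets of size `k`:
`(i,a)` is adjacent to `(j,b)` iff `i` and `j` are consecutive mod 5. -/
def cycleBlowup (k : ℕ) : SimpleGraph (Fin 5 × Fin k) :=
  SimpleGraph.fromRel (fun p q => (p.1.val + 1) % 5 = q.1.val)

def Cc (i j : Fin 5) : Prop := (i.val + 1) % 5 = j.val ∨ (j.val + 1) % 5 = i.val

instance : DecidableRel Cc := fun _ _ => instDecidableOr

lemma Cne : ∀ i j : Fin 5, Cc i j → i ≠ j := by decide

lemma adj_iff (k : ℕ) (p q : Fin 5 × Fin k) :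
    (cycleBlowup k).Adj p q ↔ Cc p.1 q.1 := by
  simp only [cycleBlowup, SimpleGraph.fromRel_adj]
  constructor
  · rintro ⟨-, h⟩; exact h
  · intro h
    exact ⟨fun hpq => Cne _ _ h (by rw [hpq]), h⟩

instance instDecAdj (k : ℕ) : DecidableRel (cycleBlowup k).Adj :=
  fun p q => decidable_of_iff _ (adj_iff k p q).symm

lemma card2 : ∀ i : Fin 5, (Finset.univ.filter (fun j => Cc i j)).card = 2 := by decide

lemma deg_eq (k : ℕ) (v : Fin 5 × Fin k) : (cycleBlowup k).degree v = 2 * k := by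
  classical
  rw [SimpleGraph.degree]
  have h1 : (cycleBlowup k).neighborFinset v
      = (Finset.univ.filter (fun j => Cc v.1 j)) ×ˢ (Finset.univ : Finset (Fin k)) := by
    ext ⟨j, b⟩
    simp [SimpleGraph.mem_neighborFinset, adj_iff k]
  rw [h1, Finset.card_product, card2, Finset.card_univ, Fintype.card_fin]

lemma ncard_nbr (k : ℕ) (v : Fin 5 × Fin k) :
    ((cycleBlowup k).neighborSet v).ncard = 2 * k := by
  rw [Set.ncard_eq_toFinset_card']
  exact deg_eq k v

lemma key : ∀ i1 j1 i2 j2 : Fin 5, Cc i1 j1 → Cc i2 j2 →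
    (Cc i1 i2 ∨ Cc i1 j2 ∨ Cc j1 i2 ∨ Cc j1 j2) := by decide

/-- For `k ≥ 1`, the blow-up `G_k` of the 5-cycle satisfies `Δ(G_k) = 2k`, its
edge set has size `5k²`, and the whole edge set is a clique in `L(G_k)²`; since
`5k² = (5/4)(2k)²` this shows `ω(L(G_k)²) ≥ (5/4)Δ(G_k)²`. -/
theorem stmt15 (k : ℕ) (hk : 0 < k) :
    IsGreatest {d : ℕ | ∃ v, ((cycleBlowup k).neighborSet v).ncard = d} (2 * k) ∧
    (cycleBlowup k).edgeSet.ncard = 5 * k ^ 2 ∧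
    (∀ e ∈ (cycleBlowup k).edgeSet, ∀ f ∈ (cycleBlowup k).edgeSet,
      EdgesClose (cycleBlowup k) e f) ∧
    4 * (cycleBlowup k).edgeSet.ncard = 5 * (2 * k) ^ 2 := by
  classical
  have hedge : (cycleBlowup k).edgeSet.ncard = 5 * k ^ 2 := by
    have hsum := SimpleGraph.sum_degrees_eq_twice_card_edges (cycleBlowup k)
    simp only [deg_eq, Finset.sum_const, Finset.card_univ, Fintype.card_prod,
      Fintype.card_fin, smul_eq_mul] at hsum
    rw [Set.ncard_eq_toFinset_card']
    have : (cycleBlowup k).edgeSet.toFinset = (cycleBlowup k).edgeFinset := rfl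
    rw [this]
    have h2 : 5 * k * (2 * k) = 2 * (5 * k ^ 2) := by ring
    omega
  refine ⟨⟨⟨((0 : Fin 5), ⟨0, hk⟩), ncard_nbr k _⟩, ?_⟩, hedge, ?_, by rw [hedge]; ring⟩
  · rintro d ⟨v, rfl⟩
    rw [ncard_nbr]
  · intro e he f hf
    induction e using Sym2.ind with
    | _ p q =>
      induction f using Sym2.ind with
      | _ p' q' =>
        rw [SimpleGraph.mem_edgeSet, adj_iff] at he hf
        rcases key _ _ _ _ he hf with h | h | h | h
        · exact ⟨p, p', Sym2.mem_mk_left _ _, Sym2.mem_mk_left _ _,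
            Or.inr ((adj_iff k _ _).mpr h)⟩
        · exact ⟨p, q', Sym2.mem_mk_left _ _, Sym2.mem_mk_right _ _,
            Or.inr ((adj_iff k _ _).mpr h)⟩
        · exact ⟨q, p', Sym2.mem_mk_right _ _, Sym2.mem_mk_left _ _,
            Or.inr ((adj_iff k _ _).mpr h)⟩
        · exact ⟨q, q', Sym2.mem_mk_right _ _, Sym2.mem_mk_right _ _,
            Or.inr ((adj_iff k _ _).mpr h)⟩
end

section
/- Let G be a bipartite graph, H a subgraph whose edge set is a clique in L(G)², and v a vertex with d_H(v) = Δ(H). Let S be the set of vertices u at distance exactly 2 from v in G such that some edge uw of H has d_G(v,w)=3. Then every vertex of S is adjacent in G to every neighbor of v in H. -/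
private lemma adj_dist_le_one {V : Type*} {G : SimpleGraph V} {a b : V}
    (h : G.Adj a b) : G.dist a b ≤ 1 := by
  simpa using SimpleGraph.dist_le h.toWalk

/-- Let `G` be bipartite, `H` a subgraph whose edge set is a clique in `L(G)²`,
and `v` a vertex of maximum degree in `H`.  Let `S` be the set of vertices `u`
at distance exactly 2 from `v` in `G` such that some edge `uw` of `H` has
`d_G(v,w) = 3`.  Then every vertex of `S` is adjacent in `G` to every neighbor
of `v` in `H`. -/
theorem stmt19 {V : Type*} [Fintype V] (G : SimpleGraph V)
    (hbip : G.Colorable 2) (H : G.Subgraph)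
    (hclique : ∀ e ∈ H.edgeSet, ∀ f ∈ H.edgeSet, EdgesClose G e f)
    (v : V) (hv : ∀ u, (H.neighborSet u).ncard ≤ (H.neighborSet v).ncard) :
    ∀ u, G.dist v u = 2 → (∃ w, H.Adj u w ∧ G.dist v w = 3) →
      ∀ x, H.Adj v x → G.Adj u x := by
  intro u hdu ⟨w, huw, hdw⟩ x hvx
  have he1 : s(v, x) ∈ H.edgeSet := hvx
  have he2 : s(u, w) ∈ H.edgeSet := huw
  obtain ⟨a, b, ha, hb, hab⟩ := hclique _ he1 _ he2
  have hvxG : G.Adj v x := hvx.adj_sub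
  have hvx1 : G.dist v x ≤ 1 := adj_dist_le_one hvxG
  rw [Sym2.mem_iff] at ha hb
  rcases ha with rfl | rfl <;> rcases hb with rfl | rfl
  · -- a = v, b = u
    rcases hab with rfl | h
    · simp [SimpleGraph.dist_self] at hdu
    · have := adj_dist_le_one h; omega
  · -- a = v, b = w
    rcases hab with rfl | h
    · simp [SimpleGraph.dist_self] at hdw
    · have := adj_dist_le_one h; omega
  · -- a = x, b = u
    rcases hab with rfl | h
    · have := adj_dist_le_one hvxG; omega
    · exact h.symm
  · -- a = x, b = w
    rcases hab with rfl | h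
    · omega
    · have h2 := SimpleGraph.dist_le (hvxG.toWalk.concat h)
      simp only [SimpleGraph.Walk.length_concat, SimpleGraph.Walk.length_cons,
        SimpleGraph.Walk.length_nil] at h2
      omega
end
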